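/- arXiv:2206.09234 — 5 statements merged into one kernel-verified Lean document; each statement's English description precedes it below -/
import Mathlib

section
/- Let z ∈ ℂ with |z| ≤ 1 and z ≠ 1, and let w ∈ ℂ∖ℤ_{≤0}. Then there exists an entire function f : ℂ → ℂ such that f(s) = Φ₀(z,s,w) for all s with Re(s) > 1. -/
open Complex

/-- The Lerch zeta series `Φ₀(z,s,w) = ∑_{n=0}^∞ z^n (n+w)^{−s}` (complex power). -/
noncomputable def lerch (z s w : ℂ) : ℂ := ∑' n : ℕ, z ^ n * ((n : ℂ) + w) ^ (-s)

/-- The non-positive integers viewed inside `ℂ`. -/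
def negInts : Set ℂ := {w : ℂ | ∃ n : ℕ, w = -(n : ℂ)}

/-!
Write `Δ` for the forward difference with step `1` and
`D_k(s) = ∑ₙ zⁿ Δᵏ[v ↦ v^{-s}](n + w)`, so that `D_0` is the Lerch series. By the mean value
theorem each difference gains a factor `(Re u)⁻¹`: for `Re s + k > 0` we get
`Δᵏ[v ↦ v^{-s}](u) = O((Re u)^{-(Re s + k)})` on `Re u > 0`, uniformly for bounded `s`. Hence
for `‖z‖ ≤ 1` the series `D_k` converges locally uniformly, and is holomorphic, on `Re s > 1 - k`.
Summation by parts gives `(1 - z) D_k = Δᵏ[v ↦ v^{-s}](w) + z D_{k+1}`, so for `z ≠ 1` the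
functions `∑_{j<k} zʲ/(1-z)^{j+1} Δʲ[v ↦ v^{-s}](w) + zᵏ/(1-z)ᵏ D_k` continue one another to
larger and larger half-planes and glue to an entire function.
-/

open Filter Set Finset
open scoped fwdDiff

theorem eqOn_of_eqOn_succ {α β : Type*} {G : ℕ → α → β} {U : ℕ → Set α} (hU : Monotone U)
    (hG : ∀ k, EqOn (G (k + 1)) (G k) (U k)) {k m : ℕ} (hkm : k ≤ m) : EqOn (G m) (G k) (U k) := by
  induction m, hkm using Nat.le_induction with
  | base => exact fun _ _ => rfl
  | succ m hkm ih => exact fun x hx => (hG m (hU hkm hx)).trans (ih hx)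

theorem exists_differentiable_eqOn_of_eqOn_succ {𝕜 E F : Type*} [NontriviallyNormedField 𝕜]
    [NormedAddCommGroup E] [NormedSpace 𝕜 E] [NormedAddCommGroup F] [NormedSpace 𝕜 F]
    {G : ℕ → E → F} {U : ℕ → Set E} (hUo : ∀ k, IsOpen (U k)) (hU : Monotone U)
    (hcover : ∀ x, ∃ k, x ∈ U k) (hd : ∀ k, DifferentiableOn 𝕜 (G k) (U k))
    (hG : ∀ k, EqOn (G (k + 1)) (G k) (U k)) :
    ∃ f : E → F, Differentiable 𝕜 f ∧ ∀ k, EqOn f (G k) (U k) := by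
  choose idx hidx using hcover
  have hf : ∀ k, EqOn (fun x => G (idx x) x) (G k) (U k) := fun k x hx => by
    rcases le_total k (idx x) with h | h
    · exact eqOn_of_eqOn_succ hU hG h hx
    · exact (eqOn_of_eqOn_succ hU hG h (hidx x)).symm
  refine ⟨fun x => G (idx x) x, fun x => ?_, hf⟩
  have hx := (hUo (idx x)).mem_nhds (hidx x)
  exact ((hd _).differentiableAt hx).congr_of_eventuallyEq
    (eventually_of_mem hx fun y hy => hf _ hy)

theorem differentiableOn_tsum_of_eventually_norm_le {F : ℕ → ℂ → ℂ} {u : ℕ → ℝ} {U : Set ℂ}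
    (hu : Summable u) (hF : ∀ n, DifferentiableOn ℂ (F n) U) (hU : IsOpen U)
    (hle : ∀ᶠ n in atTop, ∀ s ∈ U, ‖F n s‖ ≤ u n) :
    DifferentiableOn ℂ (fun s => ∑' n, F n s) U := by
  obtain ⟨N, hN⟩ := eventually_atTop.1 hle
  have htail := differentiableOn_tsum_of_summable_norm ((summable_nat_add_iff N).2 hu)
    (fun n => hF (n + N)) hU fun n s hs => hN (n + N) (Nat.le_add_left N n) s hs
  have hsum : ∀ s ∈ U, Summable fun n => F n s := fun s hs =>
    .of_norm_bounded_eventually_nat hu (eventually_atTop.2 ⟨N, fun n hn => hN n hn s hs⟩)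
  refine (((DifferentiableOn.fun_sum (u := range N) fun n _ => hF n).add htail).congr
    fun s hs => ?_)
  exact ((hsum s hs).sum_add_tsum_nat_add N).symm

theorem one_sub_mul_tsum_pow_mul {K : Type*} [Field K] [TopologicalSpace K]
    [IsTopologicalRing K] [T2Space K] {z : K} {a : ℕ → K} (ha : Summable fun n => z ^ n * a n) :
    (1 - z) * ∑' n, z ^ n * a n = a 0 + z * ∑' n, z ^ n * (a (n + 1) - a n) := by
  have h1 : Summable fun n => z ^ (n + 1) * a (n + 1) := (summable_nat_add_iff 1).2 ha
  have h2 : Summable fun n => z ^ (n + 1) * a n := by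
    simpa only [pow_succ, mul_comm, mul_left_comm] using ha.mul_left z
  have hshift : ∑' n, z ^ n * a n = a 0 + ∑' n, z ^ (n + 1) * a (n + 1) := by
    simpa using ha.tsum_eq_zero_add
  have hmul : z * ∑' n, z ^ n * a n = ∑' n, z ^ (n + 1) * a n := by
    rw [← tsum_mul_left]; simp only [pow_succ, mul_comm, mul_left_comm]
  have hdiff : z * ∑' n, z ^ n * (a (n + 1) - a n) =
      ∑' n, z ^ (n + 1) * a (n + 1) - ∑' n, z ^ (n + 1) * a n := by
    rw [← tsum_mul_left, ← h1.tsum_sub h2]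
    congr 1 with n; ring
  linear_combination hshift - hmul - hdiff

theorem norm_cpow_neg_le {s u : ℂ} (hs : 0 < s.re) (hu : 0 < u.re) :
    ‖u ^ (-s)‖ ≤ Real.exp (Real.pi * ‖s‖) * u.re ^ (-s.re) := by
  have harg : arg u * s.im ≤ Real.pi * ‖s‖ := by
    calc arg u * s.im ≤ |arg u * s.im| := le_abs_self _
      _ = |arg u| * |s.im| := abs_mul _ _
      _ ≤ Real.pi * ‖s‖ := by gcongr; exacts [abs_arg_le_pi u, abs_im_le_norm s]
  calc ‖u ^ (-s)‖ ≤ ‖u‖ ^ (-s).re / Real.exp (arg u * (-s).im) := norm_cpow_le u (-s)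
    _ = Real.exp (arg u * s.im) * ‖u‖ ^ (-s.re) := by
      rw [neg_im, mul_neg, Real.exp_neg, neg_re, div_inv_eq_mul, mul_comm]
    _ ≤ Real.exp (Real.pi * ‖s‖) * u.re ^ (-s.re) := by
      gcongr ?_ * ?_
      · exact Real.exp_le_exp.2 harg
      · exact Real.rpow_le_rpow_of_nonpos hu (re_le_norm u) (neg_nonpos.2 hs.le)

theorem hasDerivAt_fwdDiff_iter_cpow_neg (k : ℕ) (s : ℂ) {u : ℂ} (hu : 0 < u.re) :
    HasDerivAt (Δ_[1] ^[k] fun v : ℂ => v ^ (-s))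
      (-s * Δ_[1] ^[k] (fun v : ℂ => v ^ (-(s + 1))) u) u := by
  induction k generalizing u with
  | zero =>
    rw [show -(s + 1) = -s - 1 by ring]
    simpa using (hasStrictDerivAt_cpow_const (c := -s) (Or.inl hu)).hasDerivAt
  | succ k ih =>
    have hu1 : 0 < (u + 1).re := by rw [add_re, one_re]; linarith
    rw [Function.iterate_succ_apply']
    refine (((ih hu1).comp_add_const u 1).sub (ih hu)).congr_deriv ?_
    rw [Function.iterate_succ_apply', fwdDiff]
    ring

theorem differentiable_fwdDiff_iter_cpow_neg (k : ℕ) {u : ℂ} (hu : ∀ j : ℕ, u + j ≠ 0) :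
    Differentiable ℂ fun s : ℂ => Δ_[1] ^[k] (fun v : ℂ => v ^ (-s)) u := by
  simp_rw [fwdDiff_iter_eq_sum_shift, nsmul_one]
  exact Differentiable.fun_sum fun j _ =>
    (differentiable_neg.const_cpow (Or.inl (hu j))).const_smul _

theorem exists_norm_fwdDiff_iter_cpow_neg_le (k : ℕ) (r : ℝ) :
    ∃ C, 0 ≤ C ∧ ∀ s : ℂ, ‖s‖ ≤ r → 0 < s.re + k → ∀ u : ℂ, 0 < u.re →
      ‖Δ_[1] ^[k] (fun v : ℂ => v ^ (-s)) u‖ ≤ C * u.re ^ (-(s.re + k)) := by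
  induction k generalizing r with
  | zero =>
    refine ⟨Real.exp (Real.pi * r), (Real.exp_pos _).le, fun s hs hσ u hu => ?_⟩
    simp only [CharP.cast_eq_zero, add_zero] at hσ ⊢
    refine (norm_cpow_neg_le hσ hu).trans ?_
    gcongr
  | succ k ih =>
    obtain ⟨C, hC, hbound⟩ := ih (r + 1)
    refine ⟨max r 0 * C, by positivity, fun s hs hσ u hu => ?_⟩
    have hexp : -((s + 1).re + k) = -(s.re + (k + 1 : ℕ)) := by
      rw [add_re, one_re]; push_cast; ring
    have hderiv : ∀ v ∈ {v : ℂ | u.re ≤ v.re},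
        ‖-s * Δ_[1] ^[k] (fun v : ℂ => v ^ (-(s + 1))) v‖ ≤
          max r 0 * C * u.re ^ (-(s.re + (k + 1 : ℕ))) := by
      intro v hv
      have hv0 : 0 < v.re := hu.trans_le hv
      have hs1 : ‖s + 1‖ ≤ r + 1 := (norm_add_le _ _).trans (by simpa using hs)
      have hσ1 : 0 < (s + 1).re + k := by rw [add_re, one_re]; push_cast at hσ; linarith
      calc ‖-s * Δ_[1] ^[k] (fun v : ℂ => v ^ (-(s + 1))) v‖
          ≤ ‖s‖ * (C * v.re ^ (-((s + 1).re + k))) := by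
            rw [norm_mul, norm_neg]; gcongr; exact hbound _ hs1 hσ1 v hv0
        _ ≤ max r 0 * (C * u.re ^ (-((s + 1).re + k))) := by
            refine mul_le_mul (hs.trans (le_max_left _ _)) ?_ (by positivity) (by positivity)
            exact mul_le_mul_of_nonneg_left (Real.rpow_le_rpow_of_nonpos hu hv (by linarith)) hC
        _ = max r 0 * C * u.re ^ (-(s.re + (k + 1 : ℕ))) := by rw [hexp, mul_assoc]
    have hmvt := (convex_halfSpace_re_ge u.re).norm_image_sub_le_of_norm_hasDerivWithin_le
      (fun v hv => (hasDerivAt_fwdDiff_iter_cpow_neg k s (hu.trans_le hv)).hasDerivWithinAt)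
      hderiv (le_refl u.re) (show u.re ≤ (u + 1).re by simp)
    rw [Function.iterate_succ_apply', fwdDiff]
    simpa using hmvt

section LerchSeries

variable {z w : ℂ}

theorem natCast_add_ne_zero_of_notMem_negInts (hw : w ∉ negInts) (n : ℕ) : (n : ℂ) + w ≠ 0 :=
  fun h => hw ⟨n, by linear_combination h⟩

noncomputable def lerchFwdDiff (z w : ℂ) (k : ℕ) (s : ℂ) : ℂ :=
  ∑' n : ℕ, z ^ n * Δ_[1] ^[k] (fun v : ℂ => v ^ (-s)) (n + w)

theorem exists_norm_lerchFwdDiff_term_le (hz : ‖z‖ ≤ 1) (k : ℕ) (r : ℝ) {σ : ℝ}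
    (hσ : 0 < σ + k) : ∃ C, ∀ᶠ n : ℕ in atTop, ∀ s : ℂ, ‖s‖ ≤ r → σ ≤ s.re →
      ‖z ^ n * Δ_[1] ^[k] (fun v : ℂ => v ^ (-s)) (n + w)‖ ≤ C * (1 / |n + w.re| ^ (σ + k)) := by
  obtain ⟨C, hC, hbound⟩ := exists_norm_fwdDiff_iter_cpow_neg_le k r
  refine ⟨C, ?_⟩
  have hlarge : ∀ᶠ n : ℕ in atTop, 1 ≤ (n : ℝ) + w.re :=
    (tendsto_atTop_add_const_right _ w.re tendsto_natCast_atTop_atTop).eventually_ge_atTop 1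
  filter_upwards [hlarge] with n hn s hs hσs
  have hre : ((n : ℂ) + w).re = n + w.re := by simp
  calc ‖z ^ n * Δ_[1] ^[k] (fun v : ℂ => v ^ (-s)) (n + w)‖
      ≤ ‖Δ_[1] ^[k] (fun v : ℂ => v ^ (-s)) (n + w)‖ := by
        rw [norm_mul, norm_pow]
        exact mul_le_of_le_one_left (norm_nonneg _) (pow_le_one₀ (norm_nonneg z) hz)
    _ ≤ C * (n + w.re) ^ (-(s.re + k)) := by
        rw [← hre]; exact hbound s hs (by linarith) _ (by rw [hre]; linarith)
    _ ≤ C * (n + w.re) ^ (-(σ + k)) := by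
        gcongr
    _ = C * (1 / |n + w.re| ^ (σ + k)) := by
        rw [abs_of_pos (by linarith), Real.rpow_neg (by linarith), one_div]

theorem summable_lerchFwdDiff_term (hz : ‖z‖ ≤ 1) {k : ℕ} {s : ℂ} (hs : 1 < s.re + k) :
    Summable fun n : ℕ => z ^ n * Δ_[1] ^[k] (fun v : ℂ => v ^ (-s)) (n + w) := by
  obtain ⟨C, hC⟩ := exists_norm_lerchFwdDiff_term_le (w := w) hz k ‖s‖ (σ := s.re) (by linarith)
  exact .of_norm_bounded_eventually_nat
    (((Real.summable_one_div_nat_add_rpow w.re _).2 hs).mul_left C)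
    (hC.mono fun n h => h s le_rfl le_rfl)

theorem differentiableOn_lerchFwdDiff (hz : ‖z‖ ≤ 1) (hw : w ∉ negInts) (k : ℕ) :
    DifferentiableOn ℂ (lerchFwdDiff z w k) {s | 1 < s.re + k} := by
  intro s₀ (hs₀ : 1 < s₀.re + k)
  obtain ⟨σ, hσ, hσs₀⟩ := exists_between (show 1 - (k : ℝ) < s₀.re by linarith)
  obtain ⟨C, hC⟩ :=
    exists_norm_lerchFwdDiff_term_le (w := w) hz k (‖s₀‖ + 1) (σ := σ) (by linarith)
  have hσ : 1 < σ + k := by linarith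
  have hV : IsOpen {s : ℂ | σ < s.re ∧ ‖s‖ < ‖s₀‖ + 1} :=
    (isOpen_lt continuous_const continuous_re).inter (isOpen_lt continuous_norm continuous_const)
  have hdiff := differentiableOn_tsum_of_eventually_norm_le
    (F := fun n s => z ^ n * Δ_[1] ^[k] (fun v : ℂ => v ^ (-s)) (n + w))
    (((Real.summable_one_div_nat_add_rpow w.re _).2 hσ).mul_left C)
    (fun n => ((differentiable_fwdDiff_iter_cpow_neg k fun j => by
      simpa [add_right_comm] using natCast_add_ne_zero_of_notMem_negInts hw (n + j)).const_mul
        _).differentiableOn)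
    hV (hC.mono fun n h s hs => h s hs.2.le hs.1.le)
  exact (hdiff.differentiableAt (hV.mem_nhds ⟨hσs₀, lt_add_one _⟩)).differentiableWithinAt

theorem one_sub_mul_lerchFwdDiff (hz : ‖z‖ ≤ 1) {k : ℕ} {s : ℂ} (hs : 1 < s.re + k) :
    (1 - z) * lerchFwdDiff z w k s =
      Δ_[1] ^[k] (fun v : ℂ => v ^ (-s)) w + z * lerchFwdDiff z w (k + 1) s := by
  rw [lerchFwdDiff, one_sub_mul_tsum_pow_mul (summable_lerchFwdDiff_term hz hs)]
  simp only [lerchFwdDiff, Function.iterate_succ_apply', fwdDiff, Nat.cast_zero, zero_add,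
    Nat.cast_succ, add_right_comm]

noncomputable def lerchContinuation (z w : ℂ) (k : ℕ) (s : ℂ) : ℂ :=
  ∑ j ∈ range k, z ^ j / (1 - z) ^ (j + 1) * Δ_[1] ^[j] (fun v : ℂ => v ^ (-s)) w +
    z ^ k / (1 - z) ^ k * lerchFwdDiff z w k s

theorem lerchContinuation_zero (s : ℂ) : lerchContinuation z w 0 s = lerch z s w := by
  simp [lerchContinuation, lerchFwdDiff, lerch]

theorem lerchContinuation_succ (hz : ‖z‖ ≤ 1) (hz1 : z ≠ 1) {k : ℕ} {s : ℂ}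
    (hs : 1 < s.re + k) :
    lerchContinuation z w (k + 1) s = lerchContinuation z w k s := by
  have h1z : 1 - z ≠ 0 := sub_ne_zero.2 hz1.symm
  have hrec : lerchFwdDiff z w k s =
      (Δ_[1] ^[k] (fun v : ℂ => v ^ (-s)) w + z * lerchFwdDiff z w (k + 1) s) / (1 - z) := by
    rw [eq_div_iff h1z, mul_comm, one_sub_mul_lerchFwdDiff hz hs]
  rw [lerchContinuation, lerchContinuation, sum_range_succ, hrec]
  field_simp
  ring

theorem differentiableOn_lerchContinuation (hz : ‖z‖ ≤ 1) (hw : w ∉ negInts) (k : ℕ) :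
    DifferentiableOn ℂ (lerchContinuation z w k) {s | 1 < s.re + k} := by
  refine .add (.fun_sum fun j _ => (Differentiable.differentiableOn ?_)) ?_
  · refine (differentiable_fwdDiff_iter_cpow_neg j fun i => ?_).const_mul _
    simpa [add_comm] using natCast_add_ne_zero_of_notMem_negInts hw i
  · exact (differentiableOn_lerchFwdDiff hz hw k).const_mul _

end LerchSeries

theorem lerch_entire_in_s (z : ℂ) (hz1 : ‖z‖ ≤ 1) (hz2 : z ≠ 1)
    (w : ℂ) (hw : w ∉ negInts) :
    ∃ f : ℂ → ℂ, Differentiable ℂ f ∧ ∀ s : ℂ, 1 < s.re → f s = lerch z s w := by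
  have hopen : ∀ k : ℕ, IsOpen {s : ℂ | 1 < s.re + k} := fun k =>
    isOpen_lt continuous_const (continuous_re.add continuous_const)
  have hmono : Monotone fun k : ℕ => {s : ℂ | 1 < s.re + k} := by
    intro k m hkm s (hs : 1 < s.re + k)
    exact show 1 < s.re + m by linarith [(Nat.cast_le.2 hkm : (k : ℝ) ≤ m)]
  have hcover : ∀ s : ℂ, ∃ k : ℕ, 1 < s.re + k := fun s =>
    (exists_nat_gt (1 - s.re)).imp fun k hk => by linarith
  obtain ⟨f, hf, hfeq⟩ := exists_differentiable_eqOn_of_eqOn_succ hopen hmono hcover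
    (differentiableOn_lerchContinuation hz1 hw) fun k s hs => lerchContinuation_succ hz1 hz2 hs
  refine ⟨f, hf, fun s hs => ?_⟩
  rw [hfeq 0 (show 1 < s.re + (0 : ℕ) by simpa using hs), lerchContinuation_zero]
end

section
/- Let z ∈ ℂ with |z| < 1, let w ∈ ℂ, and let r be a positive integer. Then ∑_{n=0}^∞ z^n (n+w)^{r−1} = −𝓑_r(z,w)/r (the series on the left converging absolutely). -/
open Complex

/-- Apostol's function `𝓑_r(z,w)`: `r!` times the `r`-th Taylor coefficient at `t = 0`
of `t ↦ t·e^{tw}/(z·e^t − 1)`, i.e. the `r`-th derivative at `0`. -/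
noncomputable def apostolB (r : ℕ) (z w : ℂ) : ℂ :=
  iteratedDeriv r (fun t : ℂ => t * Complex.exp (t * w) / (z * Complex.exp t - 1)) 0

open scoped Nat

/-! For `‖z‖ e^{‖t‖} < 1` the double series `∑_{n,m} zⁿ ((n + w) t)ᵐ / m!` converges absolutely.
Summing it over `m` first gives `∑ₙ zⁿ e^{(n+w)t} = e^{wt} / (1 - z eᵗ)`, summing over `n` first
gives `∑ₘ (∑ₙ zⁿ (n + w)ᵐ) tᵐ / m!`. Multiplying by `-t` exhibits the Taylor series of
`t e^{tw} / (z eᵗ - 1)` at `0`, whose coefficient of `tʳ` is `-∑ₙ zⁿ (n + w)^{r-1} / (r - 1)!`. -/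

theorem iteratedDeriv_zero_eq_factorial_mul_of_hasSum {𝕜 : Type*} [RCLike 𝕜] {f : 𝕜 → 𝕜}
    {c : ℕ → 𝕜} {ρ : ℝ} (hρ : 0 < ρ)
    (hf : ∀ t : 𝕜, ‖t‖ < ρ → HasSum (fun k => c k * t ^ k) (f t)) (k : ℕ) :
    iteratedDeriv k f 0 = k ! * c k := by
  have hp : HasFPowerSeriesOnBall f (FormalMultilinearSeries.ofScalars 𝕜 c) 0
      (ENNReal.ofReal ρ) := by
    refine ⟨ENNReal.le_of_forall_nnreal_lt fun s hs => ?_, by simpa using hρ, fun {y} hy => ?_⟩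
    · have hs' : ‖((s : ℝ) : 𝕜)‖ < ρ := by
        simpa using ENNReal.toReal_lt_of_lt_ofReal hs
      refine FormalMultilinearSeries.le_radius_of_tendsto _ (l := 0) ?_
      simpa using (hf _ hs').summable.tendsto_atTop_zero.norm
    · simpa [mul_comm] using hf y (by simpa using hy)
  rw [iteratedDeriv_eq_iteratedFDeriv, ← hp.factorial_smul 1 k]
  simp

theorem summable_norm_geometric_mul_expSeries {z t : ℂ} (w : ℂ) (h : ‖z‖ * Real.exp ‖t‖ < 1) :
    Summable fun p : ℕ × ℕ => ‖z ^ p.1 * (((p.1 : ℂ) + w) * t) ^ p.2 / ((p.2)! : ℂ)‖ := by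
  have hrow (n : ℕ) : HasSum (fun m : ℕ => ‖z ^ n * (((n : ℂ) + w) * t) ^ m / (m ! : ℂ)‖)
      (‖z‖ ^ n * Real.exp ‖((n : ℂ) + w) * t‖) := by
    rw [Real.exp_eq_exp_ℝ]
    refine ((NormedSpace.expSeries_div_hasSum_exp ‖((n : ℂ) + w) * t‖).mul_left
      (‖z‖ ^ n)).congr_fun fun m => ?_
    simp [mul_div_assoc]
  refine (summable_prod_of_nonneg fun _ => norm_nonneg _).mpr
    ⟨fun n => (hrow n).summable, ?_⟩
  simp only [fun n => (hrow n).tsum_eq]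
  refine .of_nonneg_of_le (fun n => by positivity) (fun n => ?_)
    ((summable_geometric_of_lt_one (by positivity) h).mul_left (Real.exp (‖w‖ * ‖t‖)))
  have hnorm : ‖((n : ℂ) + w) * t‖ ≤ n * ‖t‖ + ‖w‖ * ‖t‖ := by
    rw [norm_mul, ← add_mul]
    gcongr
    exact (norm_add_le _ _).trans (by simp)
  calc ‖z‖ ^ n * Real.exp ‖((n : ℂ) + w) * t‖
      ≤ ‖z‖ ^ n * Real.exp (n * ‖t‖ + ‖w‖ * ‖t‖) := by gcongr
    _ = Real.exp (‖w‖ * ‖t‖) * (‖z‖ * Real.exp ‖t‖) ^ n := by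
      rw [Real.exp_add, Real.exp_nat_mul]; ring

noncomputable def lerchSum (z w : ℂ) (m : ℕ) : ℂ := ∑' n : ℕ, z ^ n * ((n : ℂ) + w) ^ m

theorem hasSum_lerchSum_mul_pow_div_factorial {z t : ℂ} (w : ℂ) (h : ‖z‖ * Real.exp ‖t‖ < 1) :
    HasSum (fun m => lerchSum z w m * t ^ m / m !) (exp (w * t) / (1 - z * exp t)) := by
  set G : ℕ × ℕ → ℂ := fun p => z ^ p.1 * (((p.1 : ℂ) + w) * t) ^ p.2 / ((p.2)! : ℂ)
  have hG : Summable G := (summable_norm_geometric_mul_expSeries w h).of_norm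
  have hrow (n : ℕ) : HasSum (fun m => G (n, m)) (z ^ n * exp (((n : ℂ) + w) * t)) := by
    have := (NormedSpace.expSeries_div_hasSum_exp (((n : ℂ) + w) * t)).mul_left (z ^ n)
    rw [← exp_eq_exp_ℂ] at this
    exact this.congr_fun fun m => by simp only [G, mul_div_assoc]
  have hcol (m : ℕ) : HasSum (fun n => G (n, m)) (lerchSum z w m * t ^ m / m !) := by
    have hterm (n : ℕ) : G (n, m) = z ^ n * ((n : ℂ) + w) ^ m * (t ^ m / m !) := by
      simp only [G, mul_pow]; ring
    rw [show lerchSum z w m * t ^ m / m ! = ∑' n, G (n, m) by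
      simp only [hterm, tsum_mul_right, lerchSum]; ring]
    exact (hG.prod_symm.prod_factor m).hasSum
  have hlt : ‖z * exp t‖ < 1 := by
    refine lt_of_le_of_lt ?_ h
    rw [norm_mul, norm_exp]
    gcongr
    exact re_le_norm t
  have hgeom : HasSum (fun n : ℕ => z ^ n * exp (((n : ℂ) + w) * t))
      (exp (w * t) / (1 - z * exp t)) := by
    rw [div_eq_mul_inv]
    refine ((hasSum_geometric_of_norm_lt_one hlt).mul_left _).congr_fun fun n => ?_
    rw [add_mul, exp_add, exp_nat_mul, mul_pow]
    ring
  have htotal : HasSum G (exp (w * t) / (1 - z * exp t)) := by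
    rw [← (hG.hasSum.prod_fiberwise hrow).unique hgeom]
    exact hG.hasSum
  exact ((Equiv.prodComm ℕ ℕ).hasSum_iff.mpr htotal).prod_fiberwise hcol

theorem exists_pos_mul_exp_lt_one {a : ℝ} (ha : a < 1) : ∃ ρ > 0, a * Real.exp ρ < 1 := by
  have hnear : ∀ᶠ ρ in nhds 0, a * Real.exp ρ < 1 :=
    (continuous_const.mul Real.continuous_exp).continuousAt.eventually_lt continuousAt_const
      (by simpa using ha)
  obtain ⟨ρ, hρ1, hρ2⟩ :=
    ((hnear.filter_mono nhdsWithin_le_nhds).and (self_mem_nhdsWithin (s := Set.Ioi 0))).exists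
  exact ⟨ρ, hρ2, hρ1⟩

theorem summable_norm_pow_mul_add_pow {z : ℂ} (hz : ‖z‖ < 1) (w : ℂ) (m : ℕ) :
    Summable fun n : ℕ => ‖z ^ n * ((n : ℂ) + w) ^ m‖ := by
  obtain ⟨ρ, hρ, hzρ⟩ := exists_pos_mul_exp_lt_one hz
  -- the `m`-th column of the double series at `t = ρ`
  have hcol := (summable_norm_geometric_mul_expSeries w (t := ρ)
    (by simpa [abs_of_pos hρ] using hzρ)).prod_symm.prod_factor m
  refine (summable_mul_right_iff (a := ρ ^ m / m !) (by positivity)).mp (hcol.congr fun n => ?_)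
  simp only [Prod.swap_prod_mk, mul_pow, norm_div, norm_mul, norm_pow, norm_real,
    Real.norm_eq_abs, abs_of_pos hρ, RCLike.norm_natCast]
  ring

noncomputable def apostolCoeff (z w : ℂ) : ℕ → ℂ
  | 0 => 0
  | m + 1 => -lerchSum z w m / m !

theorem hasSum_apostolCoeff_mul_pow {z t : ℂ} (w : ℂ) (h : ‖z‖ * Real.exp ‖t‖ < 1) :
    HasSum (fun k => apostolCoeff z w k * t ^ k) (t * exp (t * w) / (z * exp t - 1)) := by
  have hvalue : t * exp (t * w) / (z * exp t - 1) = -t * (exp (w * t) / (1 - z * exp t)) := by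
    rw [← neg_sub, div_neg, mul_comm t w]
    ring
  have hshift : HasSum (fun m => apostolCoeff z w (m + 1) * t ^ (m + 1))
      (t * exp (t * w) / (z * exp t - 1)) := by
    rw [hvalue]
    refine ((hasSum_lerchSum_mul_pow_div_factorial w h).mul_left (-t)).congr_fun fun m => ?_
    simp only [apostolCoeff]
    ring
  simpa [apostolCoeff] using
    (hasSum_nat_add_iff (f := fun k => apostolCoeff z w k * t ^ k) 1).mp hshift

theorem lerch_special_values_series (z : ℂ) (hz : ‖z‖ < 1) (w : ℂ)
    (r : ℕ) (hr : 0 < r) :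
    (Summable fun n : ℕ => ‖z ^ n * ((n : ℂ) + w) ^ (r - 1)‖) ∧
    ∑' n : ℕ, z ^ n * ((n : ℂ) + w) ^ (r - 1) = -apostolB r z w / r := by
  refine ⟨summable_norm_pow_mul_add_pow hz w (r - 1), ?_⟩
  obtain ⟨ρ, hρ, hzρ⟩ := exists_pos_mul_exp_lt_one hz
  have hB : apostolB r z w = r ! * apostolCoeff z w r :=
    iteratedDeriv_zero_eq_factorial_mul_of_hasSum hρ (fun t ht => hasSum_apostolCoeff_mul_pow w
      (lt_of_le_of_lt (by gcongr) hzρ)) r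
  obtain ⟨m, rfl⟩ : ∃ m, r = m + 1 := ⟨r - 1, by omega⟩
  have hm : (m ! : ℂ) ≠ 0 := by exact_mod_cast m.factorial_ne_zero
  rw [hB, apostolCoeff, lerchSum, Nat.factorial_succ, Nat.add_sub_cancel]
  push_cast
  field_simp
end

section
/- Let z ∈ ℂ with |z| ≤ 1, let s ∈ ℂ with Re(s) > 1, and let w ∈ ℂ with Re(w) > 0. Then the integral ∫_0^∞ t^{s−1} e^{−tw}/(1 − z·e^{−t}) dt converges absolutely and Γ(s)·Φ₀(z,s,w) = ∫_0^∞ t^{s−1} e^{−tw}/(1 − z·e^{−t}) dt, where Γ is the complex Gamma function and for t > 0, t^{s−1} = exp((s−1)·ln t) with ln the real natural logarithm. -/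
/-!
Expanding `1 / (1 - z e^{-t})` as a geometric series (legitimate for `t > 0` since
`‖z e^{-t}‖ < 1`), the integrand becomes `∑ₙ zⁿ t^{s-1} e^{-(n+w)t}`, and the `n`-th term
integrates to `Γ(s) zⁿ (n+w)^{-s}`. For real `n + w` this is the Gamma integral; for complex
`n + w` it follows by analytic continuation in the parameter across the right half-plane.
Termwise integration is justified because
`∑ₙ ∫ ‖zⁿ t^{s-1} e^{-(n+w)t}‖ ≤ Γ(Re s) ∑ₙ (n + Re w)^{-Re s} < ∞`, which also yields the
absolute integrability of the integrand.
-/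

open Complex MeasureTheory

open Set Filter Topology

namespace MeasureTheory

variable {α ι E : Type*} [MeasurableSpace α] {μ : Measure α} [NormedAddCommGroup E]
  [Countable ι]

lemma Integrable.of_hasSum_of_summable_integral_norm {f : ι → α → E} {F : α → E}
    (hf : ∀ i, Integrable (f i) μ) (hsum : Summable fun i ↦ ∫ a, ‖f i a‖ ∂μ)
    (hF : ∀ᵐ a ∂μ, HasSum (fun i ↦ f i a) (F a)) : Integrable F μ := by
  refine ⟨aestronglyMeasurable_of_tendsto_ae _
    (fun s ↦ Finset.aestronglyMeasurable_fun_sum s fun i _ ↦ (hf i).1) hF, ?_⟩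
  have hfin : ∑' i, ∫⁻ a, ‖f i a‖ₑ ∂μ ≠ ⊤ := by
    simp_rw [← ofReal_integral_norm_eq_lintegral_enorm (hf _),
      ← ENNReal.ofReal_tsum_of_nonneg (fun i ↦ integral_nonneg fun a ↦ norm_nonneg _) hsum]
    exact ENNReal.ofReal_ne_top
  calc ∫⁻ a, ‖F a‖ₑ ∂μ ≤ ∫⁻ a, ∑' i, ‖f i a‖ₑ ∂μ :=
        lintegral_mono_ae <| hF.mono fun a ha ↦ ha.tsum_eq ▸ enorm_tsum_le_tsum_enorm
    _ = ∑' i, ∫⁻ a, ‖f i a‖ₑ ∂μ := lintegral_tsum fun i ↦ (hf i).1.enorm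
    _ < ⊤ := hfin.lt_top

lemma hasSum_integral_of_hasSum_of_summable_integral_norm {f : ι → α → E} {F : α → E}
    [NormedSpace ℝ E] (hf : ∀ i, Integrable (f i) μ)
    (hsum : Summable fun i ↦ ∫ a, ‖f i a‖ ∂μ)
    (hF : ∀ᵐ a ∂μ, HasSum (fun i ↦ f i a) (F a)) :
    HasSum (fun i ↦ ∫ a, f i a ∂μ) (∫ a, F a ∂μ) :=
  integral_congr_ae (hF.mono fun _ ha ↦ ha.tsum_eq) ▸
    hasSum_integral_of_summable_integral_norm hf hsum

end MeasureTheory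

namespace Complex

lemma norm_ofReal_cpow_mul_exp_neg_mul {t : ℝ} (ht : 0 < t) (s a : ℂ) :
    ‖(t : ℂ) ^ s * exp (-(a * t))‖ = t ^ s.re * Real.exp (-(a.re * t)) := by
  rw [norm_mul, norm_cpow_eq_rpow_re_of_pos ht, norm_exp]
  simp

lemma integrableOn_cpow_mul_exp_neg_mul_Ioi {s a : ℂ} (hs : -1 < s.re) (ha : 0 < a.re) :
    IntegrableOn (fun t : ℝ ↦ (t : ℂ) ^ s * exp (-(a * t))) (Ioi 0) := by
  have hdom : IntegrableOn (fun t : ℝ ↦ t ^ s.re * Real.exp (-(a.re * t))) (Ioi 0) := by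
    simpa [Real.rpow_one] using integrableOn_rpow_mul_exp_neg_mul_rpow hs one_pos ha
  refine hdom.mono' (by fun_prop) ?_
  filter_upwards [self_mem_ae_restrict measurableSet_Ioi] with t ht
  exact (norm_ofReal_cpow_mul_exp_neg_mul ht s a).le

lemma differentiableOn_integral_cpow_mul_exp_neg_mul {s : ℂ} (hs : 0 < s.re) :
    DifferentiableOn ℂ
      (fun a : ℂ ↦ ∫ t : ℝ in Ioi 0, (t : ℂ) ^ (s - 1) * exp (-(a * t))) {a | 0 < a.re} := by
  intro a₀ ha₀
  set ε := a₀.re / 2 with hε_def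
  have hε : 0 < ε := half_pos ha₀
  have hre_ge {a : ℂ} (ha : a ∈ Metric.ball a₀ ε) : ε ≤ a.re := by
    have := (abs_re_le_norm (a - a₀)).trans_lt (mem_ball_iff_norm.mp ha)
    rw [sub_re, abs_lt] at this
    linarith [show 0 < a₀.re from ha₀]
  have hderiv (t : ℝ) (ht : 0 < t) (a : ℂ) :
      HasDerivAt (fun b : ℂ ↦ (t : ℂ) ^ (s - 1) * exp (-(b * t)))
        (-((t : ℂ) ^ s * exp (-(a * t)))) a := by
    have ht' : (t : ℂ) ≠ 0 := ofReal_ne_zero.mpr ht.ne'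
    refine ((((hasDerivAt_mul_const (t : ℂ)).neg).cexp).const_mul
      ((t : ℂ) ^ (s - 1))).congr_deriv ?_
    rw [cpow_sub _ _ ht', cpow_one]
    field_simp
    simp [mul_comm]
  refine (hasDerivAt_integral_of_dominated_loc_of_deriv_le (Metric.ball_mem_nhds a₀ hε)
    (F := fun a t ↦ (t : ℂ) ^ (s - 1) * exp (-(a * t)))
    (F' := fun a t ↦ -((t : ℂ) ^ s * exp (-(a * t))))
    (bound := fun t : ℝ ↦ ‖(t : ℂ) ^ s * exp (-(ε * t))‖)
    (.of_forall fun a ↦ by fun_prop)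
    (integrableOn_cpow_mul_exp_neg_mul_Ioi (by simp [hs]) ha₀) (by fun_prop) ?_
    (integrableOn_cpow_mul_exp_neg_mul_Ioi (by linarith) (by simpa using hε)).norm ?_)
    |>.2.differentiableAt.differentiableWithinAt
  · filter_upwards [self_mem_ae_restrict measurableSet_Ioi] with t (ht : 0 < t) a ha
    rw [norm_neg, norm_ofReal_cpow_mul_exp_neg_mul ht, norm_ofReal_cpow_mul_exp_neg_mul ht,
      ofReal_re]
    gcongr
    exact hre_ge ha
  · filter_upwards [self_mem_ae_restrict measurableSet_Ioi] with t (ht : 0 < t) a _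
    exact hderiv t ht a

lemma eqOn_re_pos_of_eq_ofReal {E : Type*} [NormedAddCommGroup E] [NormedSpace ℂ E]
    [CompleteSpace E] {f g : ℂ → E} (hf : DifferentiableOn ℂ f {a | 0 < a.re})
    (hg : DifferentiableOn ℂ g {a | 0 < a.re}) (hfg : ∀ r : ℝ, 0 < r → f r = g r) :
    EqOn f g {a | 0 < a.re} := by
  have hU : IsOpen {a : ℂ | 0 < a.re} := isOpen_lt continuous_const continuous_re
  have hreal : ∃ᶠ r : ℝ in 𝓝[≠] 1, f r = g r :=
    (eventually_nhdsWithin_of_eventually_nhds (lt_mem_nhds one_pos)).mono hfg |>.frequently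
  have hofReal : Tendsto ((↑) : ℝ → ℂ) (𝓝[≠] 1) (𝓝[≠] 1) :=
    tendsto_nhdsWithin_iff.mpr
      ⟨ofReal_one ▸ (continuous_ofReal.tendsto 1).mono_left nhdsWithin_le_nhds,
        eventually_nhdsWithin_of_forall fun r hr ↦ by simpa using hr⟩
  exact (hf.analyticOnNhd hU).eqOn_of_preconnected_of_frequently_eq (hg.analyticOnNhd hU)
    (convex_halfSpace_re_gt 0).isPreconnected (z₀ := 1) (by simp) (hofReal.frequently hreal)

theorem integral_cpow_mul_exp_neg_mul_Ioi_of_re_pos {s a : ℂ} (hs : 0 < s.re) (ha : 0 < a.re) :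
    ∫ t : ℝ in Ioi 0, (t : ℂ) ^ (s - 1) * exp (-(a * t)) = Gamma s * a ^ (-s) := by
  refine eqOn_re_pos_of_eq_ofReal (g := fun b ↦ Gamma s * b ^ (-s))
    (differentiableOn_integral_cpow_mul_exp_neg_mul hs)
    (fun b hb ↦ ((differentiableAt_id.cpow_const (Or.inl hb)).const_mul _).differentiableWithinAt)
    (fun r hr ↦ ?_) ha
  rw [integral_cpow_mul_exp_neg_mul_Ioi hs hr, mul_comm, cpow_neg, one_div,
    inv_cpow _ _ (arg_ofReal_of_nonneg hr.le ▸ Real.pi_pos.ne)]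

theorem integral_norm_cpow_mul_exp_neg_mul_Ioi {s a : ℂ} (hs : 0 < s.re) (ha : 0 < a.re) :
    ∫ t : ℝ in Ioi 0, ‖(t : ℂ) ^ (s - 1) * exp (-(a * t))‖ =
      (1 / a.re) ^ s.re * Real.Gamma s.re := by
  rw [← Real.integral_rpow_mul_exp_neg_mul_Ioi hs ha]
  refine setIntegral_congr_fun measurableSet_Ioi fun t ht ↦ ?_
  rw [norm_ofReal_cpow_mul_exp_neg_mul ht, sub_re, one_re]

end Complex

section Lerch

variable {z s w : ℂ}

lemma hasSum_lerch_integrand (hz : ‖z‖ ≤ 1) {t : ℝ} (ht : 0 < t) :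
    HasSum (fun n : ℕ ↦ z ^ n * ((t : ℂ) ^ (s - 1) * exp (-((n + w) * t))))
      (exp ((s - 1) * (Real.log t : ℂ)) * exp (-(t : ℂ) * w) / (1 - z * exp (-(t : ℂ)))) := by
  have hq : ‖z * exp (-(t : ℂ))‖ < 1 := by
    rw [norm_mul, ← ofReal_neg, norm_exp_ofReal]
    exact (mul_le_of_le_one_left (Real.exp_nonneg _) hz).trans_lt
      (Real.exp_lt_one_iff.mpr (neg_lt_zero.mpr ht))
  have hvalue :
      exp ((s - 1) * (Real.log t : ℂ)) * exp (-(t : ℂ) * w) / (1 - z * exp (-(t : ℂ))) =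
      (t : ℂ) ^ (s - 1) * exp (-(w * t)) * (1 - z * exp (-(t : ℂ)))⁻¹ := by
    rw [cpow_def_of_ne_zero (ofReal_ne_zero.mpr ht.ne'), ← ofReal_log ht.le, div_eq_mul_inv]
    ring_nf
  rw [hvalue]
  refine ((hasSum_geometric_of_norm_lt_one hq).mul_left _).congr_fun fun n ↦ ?_
  rw [mul_pow, ← exp_nat_mul, add_mul, neg_add, exp_add]
  ring_nf

lemma summable_integral_norm_lerch_term (hz : ‖z‖ ≤ 1) (hs : 1 < s.re) (hw : 0 < w.re) :
    Summable fun n : ℕ ↦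
      ∫ t : ℝ in Ioi 0, ‖z ^ n * ((t : ℂ) ^ (s - 1) * exp (-((n + w) * t)))‖ := by
  refine Summable.of_nonneg_of_le (fun n ↦ integral_nonneg fun t ↦ norm_nonneg _) (fun n ↦ ?_)
    (((Real.summable_one_div_nat_add_rpow w.re s.re).mpr hs).mul_left (Real.Gamma s.re))
  have hn : 0 < (n : ℝ) + w.re := by positivity
  simp_rw [norm_mul (z ^ n), integral_const_mul, norm_pow]
  rw [integral_norm_cpow_mul_exp_neg_mul_Ioi (by linarith) (by simpa using hn), add_re,
    natCast_re, abs_of_pos hn, Real.div_rpow zero_le_one hn.le, Real.one_rpow,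
    mul_comm (Real.Gamma _)]
  exact mul_le_of_le_one_left (by positivity) (pow_le_one₀ (norm_nonneg _) hz)

end Lerch

theorem lerch_integral_representation (z : ℂ) (hz : ‖z‖ ≤ 1)
    (s : ℂ) (hs : 1 < s.re) (w : ℂ) (hw : 0 < w.re) :
    IntegrableOn (fun t : ℝ =>
        Complex.exp ((s - 1) * (Real.log t : ℂ)) * Complex.exp (-(t : ℂ) * w) /
          (1 - z * Complex.exp (-(t : ℂ)))) (Set.Ioi 0) ∧
    Complex.Gamma s * lerch z s w =
      ∫ t in Set.Ioi (0 : ℝ),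
        Complex.exp ((s - 1) * (Real.log t : ℂ)) * Complex.exp (-(t : ℂ) * w) /
          (1 - z * Complex.exp (-(t : ℂ))) := by
  have hs₀ : 0 < s.re := by linarith
  have hre (n : ℕ) : 0 < ((n : ℂ) + w).re := by simp only [add_re, natCast_re]; positivity
  have hterm (n : ℕ) : IntegrableOn
      (fun t : ℝ ↦ z ^ n * ((t : ℂ) ^ (s - 1) * exp (-((n + w) * t)))) (Ioi 0) :=
    (integrableOn_cpow_mul_exp_neg_mul_Ioi (by simpa using hs₀) (hre n)).const_mul _
  have hpt : ∀ᵐ t : ℝ ∂volume.restrict (Ioi 0),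
      HasSum (fun n : ℕ ↦ z ^ n * ((t : ℂ) ^ (s - 1) * exp (-((n + w) * t))))
        (exp ((s - 1) * (Real.log t : ℂ)) * exp (-(t : ℂ) * w) / (1 - z * exp (-(t : ℂ)))) :=
    ae_restrict_of_forall_mem measurableSet_Ioi fun t ht ↦ hasSum_lerch_integrand hz ht
  have hsum := summable_integral_norm_lerch_term hz hs hw
  refine ⟨.of_hasSum_of_summable_integral_norm hterm hsum hpt, ?_⟩
  rw [lerch, ← tsum_mul_left]
  refine ((hasSum_integral_of_hasSum_of_summable_integral_norm hterm hsum hpt).congr_fun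
    fun n ↦ ?_).tsum_eq
  rw [integral_const_mul, integral_cpow_mul_exp_neg_mul_Ioi_of_re_pos hs₀ (hre n)]
  ring
end

section
/- Let α ∈ ℝ with α ≥ 1 and let N be a non-negative integer. Then the function H(z,s,w) = ∫_α^∞ t^{s−1} e^{−t(N+w)}/(1 − z·e^{−t}) dt (with t^{s−1} = exp((s−1)·ln t) for t > 0) is well defined (the integral converges absolutely) and is holomorphic in each of the variables z, s, w separately on the domain {z ∈ ℂ : |z| < e^α} × ℂ × {w ∈ ℂ : Re(w) > −N}. -/
/-!
For `t > α` the integrand is dominated, locally uniformly in `(z, s, a)` with `a = N + w`, by a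
constant multiple of `t ^ (σ - 1) * exp (-b * t)` with `b > 0`, since
`‖1 - z * exp (-t)‖ ≥ 1 - R * exp (-α) > 0` for `‖z‖ ≤ R < exp α`. A parametric integral of
functions holomorphic in the parameter with an integrable local bound is holomorphic: Cauchy's
estimate turns the bound on the integrand into one on its derivative in the parameter, so
differentiation under the integral sign applies.
-/

open Complex MeasureTheory Metric Filter Topology Set

theorem aestronglyMeasurable_deriv_of_eventually_aestronglyMeasurable {α E : Type*}
    [MeasurableSpace α] {μ : Measure α} [NormedAddCommGroup E] [NormedSpace ℂ E]
    {F : ℂ → α → E} {z₀ : ℂ} (hF_meas : ∀ᶠ z in 𝓝 z₀, AEStronglyMeasurable (F z) μ)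
    (h_diff : ∀ᵐ a ∂μ, DifferentiableAt ℂ (F · a) z₀) :
    AEStronglyMeasurable (fun a => deriv (F · a) z₀) μ := by
  obtain ⟨r, hr, hF_meas⟩ := eventually_nhds_iff_ball.1 hF_meas
  set h : ℕ → ℝ := fun n => r / 2 / (n + 1)
  have h_pos : ∀ n, 0 < h n := fun n => by positivity
  have hx_mem : ∀ n, z₀ + h n ∈ ball z₀ r := fun n => by
    rw [mem_ball, dist_eq, add_sub_cancel_left, norm_real, Real.norm_of_nonneg (h_pos n).le]
    exact (div_le_self (by positivity) (by simp)).trans_lt (half_lt_self hr)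
  have hx : Tendsto (fun n => z₀ + h n) atTop (𝓝[≠] z₀) := by
    refine tendsto_nhdsWithin_of_tendsto_nhds_of_eventually_within _ ?_
      (Eventually.of_forall fun n => by simpa using (h_pos n).ne')
    have : Tendsto h atTop (𝓝 0) := by
      simpa [h, div_eq_mul_one_div (r / 2)] using
        (tendsto_one_div_add_atTop_nhds_zero_nat (𝕜 := ℝ)).const_mul (r / 2)
    simpa using (continuous_ofReal.tendsto 0 |>.comp this).const_add z₀
  refine aestronglyMeasurable_of_tendsto_ae atTop (f := fun n a => slope (F · a) z₀ (z₀ + h n))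
    (fun n => ?_) (h_diff.mono fun a ha => ha.hasDerivAt.tendsto_slope.comp hx)
  simp only [slope_def_module]
  exact ((hF_meas _ (hx_mem n)).sub (hF_meas _ (mem_ball_self hr))).const_smul _

theorem differentiableAt_integral_of_dominated {α E : Type*} [MeasurableSpace α]
    {μ : Measure α} [NormedAddCommGroup E] [NormedSpace ℂ E] [CompleteSpace E]
    {F : ℂ → α → E} {z₀ : ℂ} {r : ℝ} {bound : α → ℝ} (hr : 0 < r)
    (hF_meas : ∀ z ∈ ball z₀ r, AEStronglyMeasurable (F z) μ)
    (h_diff : ∀ᵐ a ∂μ, DifferentiableOn ℂ (F · a) (ball z₀ r))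
    (h_bound : ∀ᵐ a ∂μ, ∀ z ∈ ball z₀ r, ‖F z a‖ ≤ bound a)
    (bound_integrable : Integrable bound μ) :
    DifferentiableAt ℂ (fun z => ∫ a, F z a ∂μ) z₀ := by
  have hF_int : Integrable (F z₀) μ :=
    bound_integrable.mono' (hF_meas z₀ (mem_ball_self hr))
      (h_bound.mono fun a ha => ha z₀ (mem_ball_self hr))
  have h_deriv_bound :
      ∀ᵐ a ∂μ, ∀ z ∈ ball z₀ (r / 2), ‖deriv (F · a) z‖ ≤ bound a / (r / 2) := by
    filter_upwards [h_diff, h_bound] with a ha_diff ha_bound z hz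
    have h_sub : closedBall z (r / 2) ⊆ ball z₀ r := fun ζ hζ => by
      rw [mem_ball] at hz ⊢; rw [mem_closedBall] at hζ
      linarith [dist_triangle ζ z z₀]
    exact norm_deriv_le_of_forall_mem_sphere_norm_le (half_pos hr) (ha_diff.diffContOnCl_ball h_sub)
      fun ζ hζ => ha_bound ζ (h_sub (sphere_subset_closedBall hζ))
  have h_hasDeriv :
      ∀ᵐ a ∂μ, ∀ z ∈ ball z₀ (r / 2), HasDerivAt (F · a) (deriv (F · a) z) z := by
    filter_upwards [h_diff] with a ha z hz
    exact (ha.differentiableAt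
      (isOpen_ball.mem_nhds (ball_subset_ball (half_le_self hr.le) hz))).hasDerivAt
  have hF_meas_nhds : ∀ᶠ z in 𝓝 z₀, AEStronglyMeasurable (F z) μ :=
    eventually_nhds_iff_ball.2 ⟨r, hr, hF_meas⟩
  refine (hasDerivAt_integral_of_dominated_loc_of_deriv_le (ball_mem_nhds z₀ (half_pos hr))
    hF_meas_nhds hF_int
    (aestronglyMeasurable_deriv_of_eventually_aestronglyMeasurable hF_meas_nhds
      (h_hasDeriv.mono fun a ha => (ha z₀ (mem_ball_self (half_pos hr))).differentiableAt))
    h_deriv_bound (bound_integrable.div_const _) h_hasDeriv).2.differentiableAt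

/-- The integrand of Lerch's representation
`Φ(z, s, a) Γ(s) = ∫₀^∞ t ^ (s - 1) * exp (-a * t) / (1 - z * exp (-t)) dt`. -/
noncomputable def lerchIntegrand (z s a : ℂ) (t : ℝ) : ℂ :=
  cexp ((s - 1) * (Real.log t : ℂ)) * cexp (-(t : ℂ) * a) / (1 - z * cexp (-(t : ℂ)))

theorem measurable_lerchIntegrand (z s a : ℂ) : Measurable (lerchIntegrand z s a) := by
  unfold lerchIntegrand; fun_prop

theorem one_sub_mul_exp_neg_le_norm {z : ℂ} {R α t : ℝ} (hz : ‖z‖ ≤ R) (ht : α ≤ t) :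
    1 - R * Real.exp (-α) ≤ ‖1 - z * cexp (-(t : ℂ))‖ := by
  have : ‖z * cexp (-(t : ℂ))‖ ≤ R * Real.exp (-α) := by
    rw [norm_mul, ← ofReal_neg, norm_exp_ofReal]
    exact mul_le_mul hz (Real.exp_le_exp.2 (neg_le_neg ht)) (Real.exp_pos _).le
      ((norm_nonneg z).trans hz)
  calc 1 - R * Real.exp (-α) ≤ ‖(1 : ℂ)‖ - ‖z * cexp (-(t : ℂ))‖ := by
        rw [norm_one]; linarith
    _ ≤ ‖1 - z * cexp (-(t : ℂ))‖ := norm_sub_norm_le _ _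

theorem norm_lerchIntegrand_le {z s a : ℂ} {α t R σ b : ℝ} (ht₁ : 1 ≤ t) (ht : α ≤ t)
    (hR : R < Real.exp α) (hz : ‖z‖ ≤ R) (hs : s.re ≤ σ) (ha : b ≤ a.re) :
    ‖lerchIntegrand z s a t‖ ≤
      t ^ (σ - 1) * Real.exp (-b * t) / (1 - R * Real.exp (-α)) := by
  have ht₀ : 0 < t := zero_lt_one.trans_le ht₁
  have hc : 0 < 1 - R * Real.exp (-α) := by
    rwa [Real.exp_neg, ← div_eq_mul_inv, sub_pos, div_lt_one (Real.exp_pos α)]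
  have h_pow : ‖cexp ((s - 1) * (Real.log t : ℂ))‖ ≤ t ^ (σ - 1) := by
    rw [norm_exp, re_mul_ofReal, sub_re, one_re, Real.rpow_def_of_pos ht₀, mul_comm]
    exact Real.exp_le_exp.2 (mul_le_mul_of_nonneg_left (by linarith) (Real.log_nonneg ht₁))
  have h_exp : ‖cexp (-(t : ℂ) * a)‖ ≤ Real.exp (-b * t) := by
    rw [norm_exp, Real.exp_le_exp, ← ofReal_neg, re_ofReal_mul]
    nlinarith
  rw [lerchIntegrand, norm_div, norm_mul]
  exact div_le_div₀ (by positivity) (mul_le_mul h_pow h_exp (norm_nonneg _) (by positivity)) hc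
    (one_sub_mul_exp_neg_le_norm hz ht)

theorem integrableOn_rpow_mul_exp_neg_mul_Ioi {α σ b : ℝ} (hα : 0 ≤ α) (hσ : 0 < σ)
    (hb : 0 < b) :
    IntegrableOn (fun t => t ^ (σ - 1) * Real.exp (-b * t)) (Ioi α) := by
  have h := integrableOn_rpow_mul_exp_neg_mul_rpow (s := σ - 1) (by linarith) one_pos hb
  simp only [Real.rpow_one] at h
  exact h.mono_set (Ioi_subset_Ioi hα)

theorem differentiableOn_lerchIntegrand_z (s a : ℂ) (t : ℝ) :
    DifferentiableOn ℂ (fun z => lerchIntegrand z s a t) (ball 0 (Real.exp t)) := by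
  refine (differentiableOn_const _).div (by fun_prop) fun z hz => sub_ne_zero.2 (Ne.symm ?_)
  refine ne_of_apply_ne norm (ne_of_lt ?_)
  rw [mem_ball_zero_iff] at hz
  rw [norm_mul, ← ofReal_neg, norm_exp_ofReal, norm_one, Real.exp_neg, ← div_eq_mul_inv]
  exact (div_lt_one (Real.exp_pos t)).2 hz

theorem differentiable_lerchIntegrand_s (z a : ℂ) (t : ℝ) :
    Differentiable ℂ fun s => lerchIntegrand z s a t := by
  unfold lerchIntegrand; fun_prop

theorem differentiable_lerchIntegrand_a (z s : ℂ) (t : ℝ) :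
    Differentiable ℂ fun a => lerchIntegrand z s a t := by
  unfold lerchIntegrand; fun_prop

theorem exists_integrable_bound_lerchIntegrand {α : ℝ} (hα : 1 ≤ α) {z₀ s₀ a₀ : ℂ}
    (hz₀ : ‖z₀‖ < Real.exp α) (ha₀ : 0 < a₀.re) :
    ∃ r > 0, ball z₀ r ⊆ ball 0 (Real.exp α) ∧
      ∃ bound : ℝ → ℝ, IntegrableOn bound (Ioi α) ∧
        ∀ t ∈ Ioi α, ∀ z ∈ ball z₀ r, ∀ s ∈ ball s₀ r, ∀ a ∈ ball a₀ r,
          ‖lerchIntegrand z s a t‖ ≤ bound t := by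
  set r := min ((Real.exp α - ‖z₀‖) / 2) (a₀.re / 2)
  have hr : 0 < r := lt_min (by linarith) (by linarith)
  have hr_z : r < Real.exp α - ‖z₀‖ := (min_le_left _ _).trans_lt (by linarith)
  have hr_a : r < a₀.re := (min_le_right _ _).trans_lt (by linarith)
  have h_re {w w₀ : ℂ} (hw : w ∈ ball w₀ r) : |w.re - w₀.re| < r := by
    rw [mem_ball, dist_eq] at hw
    exact (sub_re w w₀ ▸ abs_re_le_norm _).trans_lt hw
  have h_norm : ∀ z ∈ ball z₀ r, ‖z‖ ≤ ‖z₀‖ + r := fun z hz => by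
    linarith [norm_le_norm_add_norm_sub' z z₀, (mem_ball_iff_norm.1 hz).le]
  refine ⟨r, hr, fun z hz => mem_ball_zero_iff.2 (by linarith [h_norm z hz]),
    fun t => t ^ (|s₀.re| + r - 1) * Real.exp (-(a₀.re - r) * t) /
      (1 - (‖z₀‖ + r) * Real.exp (-α)),
    (integrableOn_rpow_mul_exp_neg_mul_Ioi (by linarith) (by positivity) (by linarith)).div_const _,
    fun t ht z hz s hs a ha => norm_lerchIntegrand_le (hα.trans ht.le) ht.le (by linarith)
      (h_norm z hz) ?_ ?_⟩
  · linarith [le_abs_self s₀.re, (abs_lt.1 (h_re hs)).2]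
  · linarith [(abs_lt.1 (h_re ha)).1]

theorem H_integral_holomorphic (α : ℝ) (hα : 1 ≤ α) (N : ℕ) :
    ∀ z s w : ℂ, ‖z‖ < Real.exp α → -(N : ℝ) < w.re →
      IntegrableOn (fun t : ℝ =>
          Complex.exp ((s - 1) * (Real.log t : ℂ)) *
            Complex.exp (-(t : ℂ) * ((N : ℂ) + w)) /
            (1 - z * Complex.exp (-(t : ℂ)))) (Set.Ioi α) ∧
      DifferentiableAt ℂ (fun z' => ∫ t in Set.Ioi α,
          Complex.exp ((s - 1) * (Real.log t : ℂ)) *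
            Complex.exp (-(t : ℂ) * ((N : ℂ) + w)) /
            (1 - z' * Complex.exp (-(t : ℂ)))) z ∧
      DifferentiableAt ℂ (fun s' => ∫ t in Set.Ioi α,
          Complex.exp ((s' - 1) * (Real.log t : ℂ)) *
            Complex.exp (-(t : ℂ) * ((N : ℂ) + w)) /
            (1 - z * Complex.exp (-(t : ℂ)))) s ∧
      DifferentiableAt ℂ (fun w' => ∫ t in Set.Ioi α,
          Complex.exp ((s - 1) * (Real.log t : ℂ)) *
            Complex.exp (-(t : ℂ) * ((N : ℂ) + w')) /
            (1 - z * Complex.exp (-(t : ℂ)))) w := by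
  intro z s w hz hw
  set a : ℂ := N + w
  have ha : 0 < a.re := by simp only [a, add_re, natCast_re]; linarith
  obtain ⟨r, hr, hz_ball, bound, h_int, h_bound⟩ :=
    exists_integrable_bound_lerchIntegrand hα hz ha (s₀ := s)
  have h_meas (z s a : ℂ) :
      AEStronglyMeasurable (lerchIntegrand z s a) (volume.restrict (Ioi α)) :=
    (measurable_lerchIntegrand z s a).aestronglyMeasurable
  have h_ae {p : ℝ → Prop} (h : ∀ t ∈ Ioi α, p t) : ∀ᵐ t ∂volume.restrict (Ioi α), p t :=
    ae_restrict_of_forall_mem measurableSet_Ioi h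
  have h_center {x : ℂ} : x ∈ ball x r := mem_ball_self hr
  refine ⟨h_int.mono' (h_meas z s a)
    (h_ae fun t ht => h_bound t ht z h_center s h_center a h_center), ?_, ?_, ?_⟩
  · exact differentiableAt_integral_of_dominated hr (fun _ _ => h_meas _ s a)
      (h_ae fun t ht => (differentiableOn_lerchIntegrand_z s a t).mono
        (hz_ball.trans (ball_subset_ball (Real.exp_le_exp.2 ht.le))))
      (h_ae fun t ht z' hz' => h_bound t ht z' hz' s h_center a h_center) h_int
  · exact differentiableAt_integral_of_dominated hr (fun _ _ => h_meas z _ a)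
      (h_ae fun t _ => (differentiable_lerchIntegrand_s z a t).differentiableOn)
      (h_ae fun t ht s' hs' => h_bound t ht z h_center s' hs' a h_center) h_int
  · refine (differentiableAt_comp_add_left
      (f := fun a' => ∫ t in Ioi α, lerchIntegrand z s a' t) (N : ℂ)).2 ?_
    exact differentiableAt_integral_of_dominated hr (fun _ _ => h_meas z s _)
      (h_ae fun t _ => (differentiable_lerchIntegrand_a z s t).differentiableOn)
      (h_ae fun t ht a' ha' => h_bound t ht z h_center s h_center a' ha') h_int
end

section
/- Let α ∈ ℝ with α ≥ 1 and let m, N be non-negative integers. Define I(z,s,w) = ∫_0^α ( t·e^{−t(N+w)}/(1 − z·e^{−t}) − ∑_{r=0}^m 𝓑_r(z, N+w)·(−1)^r t^r/r! ) · t^{s−2} dt, where t^{s−2} = exp((s−2)·ln t) for t > 0. Then the integral converges absolutely and I is holomorphic in each of the variables z, s, w separately on the domain {z ∈ ℂ : z ∉ [1, e^α]} × {s ∈ ℂ : Re(s) > −m} × {w ∈ ℂ : Re(w) > −N}. -/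
/-!
Write the integrand as `R(-t) · t^(s-2)`, where `R` is the remainder of the degree-`m` Taylor
polynomial at `0` of `g(u) = u e^(u w) / (z e^u - 1)`, whose Taylor coefficients are the
`𝓑_r(z, w)`. Since `z ∉ [1, e^α]`, there is a `δ > 0` such that `g` is holomorphic on the closed
`δ`-neighbourhood of `[-α, 0]` for every `z'` within `δ` of `z`; Cauchy's estimates on the circle
of radius `δ` then give `‖R(-t)‖ ≤ C t^(m+1)` on `(0, α]`, uniformly for `z'` near `z` and `w'`
near `w`. So the integrand is dominated, locally uniformly in `(z, s, w)`, by a sum of two powers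
`t^(m - 1 + Re s ± ε)`, which are integrable because `Re s > -m`. The integrand is holomorphic in
each variable separately (the Taylor coefficients by the Cauchy integral formula), and a locally
uniformly dominated integral of holomorphic functions is holomorphic, the bound on the derivative
again coming from Cauchy's estimate.
-/
open Complex MeasureTheory

/-- The closed real interval `[1, e^α]` viewed inside `ℂ`. -/
def segOneExp (α : ℝ) : Set ℂ :=
  {z : ℂ | ∃ x : ℝ, 1 ≤ x ∧ x ≤ Real.exp α ∧ (x : ℂ) = z}

open Metric Filter Topology

section ParametricIntegral

variable {X E : Type*} [MeasurableSpace X] {μ : Measure X}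
  [NormedAddCommGroup E] [NormedSpace ℂ E]

theorem aestronglyMeasurable_deriv_of_forall_mem_ball {F : ℂ → X → E} {x₀ : ℂ} {r : ℝ}
    (hr : 0 < r) (hF_meas : ∀ x ∈ ball x₀ r, AEStronglyMeasurable (F x) μ)
    (hF_diff : ∀ᵐ t ∂μ, DifferentiableAt ℂ (F · t) x₀) :
    AEStronglyMeasurable (fun t => deriv (F · t) x₀) μ := by
  set x : ℕ → ℂ := fun n => x₀ + (r / (n + 2) : ℝ) with hx
  have hx_ball (n : ℕ) : x n ∈ ball x₀ r := by
    have : r / (n + 2) < r := div_lt_self hr (by linarith [n.cast_nonneg (α := ℝ)])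
    rwa [mem_ball, dist_eq_norm, hx, add_sub_cancel_left, Complex.norm_real,
      Real.norm_of_nonneg (by positivity)]
  have hx_lim : Tendsto x atTop (𝓝[≠] x₀) := by
    refine tendsto_nhdsWithin_of_tendsto_nhds_of_eventually_within _ ?_ (.of_forall fun n => ?_)
    · have : Tendsto (fun n : ℕ => r / ((n : ℝ) + 2)) atTop (𝓝 0) :=
        tendsto_const_nhds.div_atTop
          (tendsto_atTop_add_const_right _ _ tendsto_natCast_atTop_atTop)
      simpa [hx] using tendsto_const_nhds.add (Complex.continuous_ofReal.tendsto 0 |>.comp this)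
    · simp only [hx, Set.mem_compl_singleton_iff, ne_eq, add_eq_left, Complex.ofReal_eq_zero]
      positivity
  refine aestronglyMeasurable_of_tendsto_ae atTop (f := fun n t => slope (F · t) x₀ (x n))
    (fun n => ?_) ?_
  · exact ((hF_meas _ (hx_ball n)).sub (hF_meas _ (mem_ball_self hr))).const_smul _
  · filter_upwards [hF_diff] with t ht
    exact (hasDerivAt_iff_tendsto_slope.1 ht.hasDerivAt).comp hx_lim

theorem differentiableAt_integral_of_forall_mem_ball [CompleteSpace E] {F : ℂ → X → E}
    {x₀ : ℂ} {r : ℝ} (hr : 0 < r) {bound : X → ℝ}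
    (hF_meas : ∀ x ∈ ball x₀ r, AEStronglyMeasurable (F x) μ)
    (hF_diff : ∀ᵐ t ∂μ, DifferentiableOn ℂ (F · t) (ball x₀ r))
    (hF_bound : ∀ᵐ t ∂μ, ∀ x ∈ ball x₀ r, ‖F x t‖ ≤ bound t)
    (bound_integrable : Integrable bound μ) :
    DifferentiableAt ℂ (fun x => ∫ t, F x t ∂μ) x₀ := by
  have hr2 : 0 < r / 2 := half_pos hr
  have hsub {x : ℂ} (hx : x ∈ ball x₀ (r / 2)) : closedBall x (r / 2) ⊆ ball x₀ r :=
    fun y hy => mem_ball.2 (by linarith [dist_triangle y x x₀, mem_closedBall.1 hy, mem_ball.1 hx])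
  -- Cauchy's estimate turns the bound on `F` into a bound on its derivative on a smaller ball.
  have hF'_bound :
      ∀ᵐ t ∂μ, ∀ x ∈ ball x₀ (r / 2), ‖deriv (F · t) x‖ ≤ bound t / (r / 2) := by
    filter_upwards [hF_diff, hF_bound] with t hdiff hbound x hx
    refine Complex.norm_deriv_le_of_forall_mem_sphere_norm_le hr2 ?_ fun y hy =>
      hbound y (hsub hx (sphere_subset_closedBall hy))
    exact (hdiff.mono (by rw [closure_ball x hr2.ne']; exact hsub hx)).diffContOnCl
  refine (hasDerivAt_integral_of_dominated_loc_of_deriv_le (ball_mem_nhds x₀ hr2)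
    (eventually_of_mem (ball_mem_nhds x₀ hr) hF_meas) ?_
    (aestronglyMeasurable_deriv_of_forall_mem_ball hr hF_meas ?_) hF'_bound
    (bound_integrable.div_const _) ?_).2.differentiableAt
  · refine bound_integrable.mono' (hF_meas x₀ (mem_ball_self hr)) ?_
    filter_upwards [hF_bound] with t ht using ht x₀ (mem_ball_self hr)
  · filter_upwards [hF_diff] with t ht
    exact ht.differentiableAt (ball_mem_nhds x₀ hr)
  · filter_upwards [hF_diff] with t ht x hx
    exact (ht.differentiableAt
      (isOpen_ball.mem_nhds (hsub hx (mem_closedBall_self hr2.le)))).hasDerivAt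

theorem differentiableOn_setIntegral_of_forall_mem [CompleteSpace E] {F : ℂ → X → E} {s : Set X}
    (hs : MeasurableSet s) {U : Set ℂ} (hU : IsOpen U) {bound : X → ℝ}
    (hF_meas : ∀ x ∈ U, AEStronglyMeasurable (F x) (μ.restrict s))
    (hF_diff : ∀ t ∈ s, DifferentiableOn ℂ (F · t) U)
    (hF_bound : ∀ t ∈ s, ∀ x ∈ U, ‖F x t‖ ≤ bound t)
    (bound_integrable : IntegrableOn bound s μ) :
    DifferentiableOn ℂ (fun x => ∫ t in s, F x t ∂μ) U := by
  intro x₀ hx₀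
  obtain ⟨r, hr, hball⟩ := Metric.isOpen_iff.1 hU x₀ hx₀
  refine (differentiableAt_integral_of_forall_mem_ball hr (fun x hx => hF_meas x (hball hx))
    ?_ ?_ bound_integrable).differentiableWithinAt
  · exact (ae_restrict_iff' hs).2 (.of_forall fun t ht => (hF_diff t ht).mono hball)
  · exact (ae_restrict_iff' hs).2 (.of_forall fun t ht x hx => hF_bound t ht x (hball hx))

end ParametricIntegral

theorem differentiableOn_iteratedDeriv_of_forall_mem_sphere {E : Type*} [NormedAddCommGroup E]
    [NormedSpace ℂ E] [CompleteSpace E] {g : ℂ → ℂ → E} {U : Set ℂ}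
    (hU : IsOpen U) {ρ M : ℝ} (hρ : 0 < ρ) (n : ℕ)
    (hg : ∀ x ∈ U, DifferentiableOn ℂ (g x) (closedBall 0 ρ))
    (hg_param : ∀ ζ ∈ sphere (0 : ℂ) ρ, DifferentiableOn ℂ (g · ζ) U)
    (hM : ∀ x ∈ U, ∀ ζ ∈ sphere (0 : ℂ) ρ, ‖g x ζ‖ ≤ M) :
    DifferentiableOn ℂ (fun x => iteratedDeriv n (g x) 0) U := by
  set F : ℂ → ℝ → E := fun x θ =>
    deriv (circleMap 0 ρ) θ • (1 / (circleMap 0 ρ θ - 0) ^ (n + 1)) • g x (circleMap 0 ρ θ)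
  have hcauchy : ∀ x ∈ U, iteratedDeriv n (g x) 0 =
      (2 * Real.pi * I / n.factorial)⁻¹ • ∫ θ in Set.Icc 0 (2 * Real.pi), F x θ := by
    intro x hx
    rw [show (∫ θ in Set.Icc 0 (2 * Real.pi), F x θ) = _ from
        (circleIntegral_def_Icc (fun ζ => (1 / (ζ - 0) ^ (n + 1)) • g x ζ) 0 ρ).symm,
      ((hg x hx).diffContOnCl_ball subset_rfl).circleIntegral_one_div_sub_center_pow_smul hρ,
      inv_smul_smul₀ (by simp [Real.pi_ne_zero, Nat.factorial_ne_zero])]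
  have hmem (θ : ℝ) : circleMap 0 ρ θ ∈ sphere (0 : ℂ) ρ := circleMap_mem_sphere 0 hρ.le θ
  refine DifferentiableOn.congr (DifferentiableOn.const_smul ?_ _) hcauchy
  refine differentiableOn_setIntegral_of_forall_mem measurableSet_Icc hU
    (bound := fun _ => ρ * (1 / ρ ^ (n + 1) * M)) (fun x hx => ?_) (fun θ _ => ?_)
    (fun θ _ x hx => ?_) (integrableOn_const measure_Icc_lt_top.ne)
  · refine Continuous.aestronglyMeasurable ?_
    have : Continuous fun θ => g x (circleMap 0 ρ θ) :=
      (hg x hx).continuousOn.comp_continuous (continuous_circleMap 0 ρ)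
        fun θ => sphere_subset_closedBall (hmem θ)
    simp only [F, deriv_circleMap, sub_zero]
    exact ((continuous_circleMap 0 ρ).mul continuous_const).smul
      ((continuous_const.div ((continuous_circleMap 0 ρ).pow _) fun θ =>
        pow_ne_zero _ (circleMap_ne_center hρ.ne')).smul this)
  · exact ((hg_param _ (hmem θ)).const_smul _).const_smul _
  · simp only [F, deriv_circleMap, sub_zero, norm_smul, norm_mul, norm_div, norm_pow, norm_one,
      Complex.norm_I, mul_one, norm_circleMap_zero, abs_of_pos hρ]
    gcongr
    exact hM x hx _ (hmem θ)

noncomputable def taylorRemainder (m : ℕ) (g : ℂ → ℂ) (u : ℂ) : ℂ :=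
  g u - ∑ r ∈ Finset.range (m + 1), iteratedDeriv r g 0 * u ^ r / r.factorial

section TaylorRemainder

variable {g : ℂ → ℂ} {ρ M : ℝ}

theorem norm_iteratedDeriv_mul_pow_div_factorial_le (hρ : 0 < ρ)
    (hg : DifferentiableOn ℂ g (closedBall 0 ρ)) (hM : ∀ ζ ∈ sphere (0 : ℂ) ρ, ‖g ζ‖ ≤ M)
    (r : ℕ) (u : ℂ) :
    ‖iteratedDeriv r g 0 * u ^ r / r.factorial‖ ≤ M * (‖u‖ / ρ) ^ r := by
  have hcoeff := Complex.norm_iteratedDeriv_le_of_forall_mem_sphere_norm_le r hρ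
    (hg.diffContOnCl_ball subset_rfl) hM
  rw [norm_div, norm_mul, norm_pow, Complex.norm_natCast, div_pow]
  calc ‖iteratedDeriv r g 0‖ * ‖u‖ ^ r / r.factorial
      ≤ r.factorial * M / ρ ^ r * ‖u‖ ^ r / r.factorial := by gcongr
    _ = M * (‖u‖ ^ r / ρ ^ r) := by field_simp

theorem norm_taylorRemainder_le_of_norm_le_half (hρ : 0 < ρ)
    (hg : DifferentiableOn ℂ g (closedBall 0 ρ)) (hM : ∀ ζ ∈ sphere (0 : ℂ) ρ, ‖g ζ‖ ≤ M)
    (m : ℕ) {u : ℂ} (hu : ‖u‖ ≤ ρ / 2) :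
    ‖taylorRemainder m g u‖ ≤ 2 * M * (‖u‖ / ρ) ^ (m + 1) := by
  set q := ‖u‖ / ρ
  have hq0 : 0 ≤ q := by positivity
  have hq : q ≤ 1 / 2 := by rw [div_le_iff₀ hρ]; linarith
  have hM0 : 0 ≤ M := (norm_nonneg _).trans (hM ρ (by simp [abs_of_pos hρ]))
  have hsum : HasSum (fun n => iteratedDeriv n g 0 * u ^ n / n.factorial) (g u) := by
    have := Complex.hasSum_taylorSeries_on_ball (hg.mono ball_subset_closedBall)
      (mem_ball_zero_iff.2 (by linarith : ‖u‖ < ρ))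
    simpa [smul_eq_mul, div_eq_inv_mul, mul_comm, mul_left_comm] using this
  have htail : HasSum (fun n => M * q ^ (m + 1) * q ^ n) (M * q ^ (m + 1) * (1 - q)⁻¹) :=
    (hasSum_geometric_of_lt_one hq0 (by linarith)).mul_left _
  calc ‖taylorRemainder m g u‖ ≤ M * q ^ (m + 1) * (1 - q)⁻¹ := by
        refine ((hasSum_nat_add_iff' (m + 1)).2 hsum).norm_le_of_bounded htail fun n => ?_
        rw [mul_assoc, ← pow_add, add_comm]
        exact norm_iteratedDeriv_mul_pow_div_factorial_le hρ hg hM _ u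
    _ ≤ M * q ^ (m + 1) * 2 := by
        gcongr
        rw [inv_le_comm₀ (by linarith) two_pos]
        linarith
    _ = 2 * M * q ^ (m + 1) := by ring

theorem norm_taylorRemainder_le_add (hρ : 0 < ρ)
    (hg : DifferentiableOn ℂ g (closedBall 0 ρ)) (hM : ∀ ζ ∈ sphere (0 : ℂ) ρ, ‖g ζ‖ ≤ M)
    (m : ℕ) (u : ℂ) :
    ‖taylorRemainder m g u‖ ≤ ‖g u‖ + M * ∑ r ∈ Finset.range (m + 1), (‖u‖ / ρ) ^ r := by
  refine (norm_sub_le _ _).trans (add_le_add le_rfl ((norm_sum_le _ _).trans ?_))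
  rw [Finset.mul_sum]
  exact Finset.sum_le_sum fun r _ => norm_iteratedDeriv_mul_pow_div_factorial_le hρ hg hM r u

theorem exists_norm_taylorRemainder_le (m : ℕ) (hρ : 0 < ρ) (M A : ℝ) :
    ∃ C, ∀ g : ℂ → ℂ, DifferentiableOn ℂ g (closedBall 0 ρ) →
      (∀ ζ ∈ sphere (0 : ℂ) ρ, ‖g ζ‖ ≤ M) → ∀ u, ‖u‖ ≤ A → ‖g u‖ ≤ M →
        ‖taylorRemainder m g u‖ ≤ C * ‖u‖ ^ (m + 1) := by
  set K := M + M * ∑ r ∈ Finset.range (m + 1), (A / ρ) ^ r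
  refine ⟨max (2 * M / ρ ^ (m + 1)) (K / (ρ / 2) ^ (m + 1)), fun g hg hM u huA hu => ?_⟩
  have hM0 : 0 ≤ M := (norm_nonneg _).trans hu
  rcases le_or_gt ‖u‖ (ρ / 2) with hsmall | hlarge
  · calc ‖taylorRemainder m g u‖ ≤ 2 * M * (‖u‖ / ρ) ^ (m + 1) :=
          norm_taylorRemainder_le_of_norm_le_half hρ hg hM m hsmall
      _ = 2 * M / ρ ^ (m + 1) * ‖u‖ ^ (m + 1) := by rw [div_pow]; ring
      _ ≤ _ := by gcongr; exact le_max_left _ _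
  · have hK : ‖taylorRemainder m g u‖ ≤ K := by
      refine (norm_taylorRemainder_le_add hρ hg hM m u).trans (show _ ≤ M + M * _ by gcongr)
    calc ‖taylorRemainder m g u‖ ≤ K / (ρ / 2) ^ (m + 1) * (ρ / 2) ^ (m + 1) := by
          rwa [div_mul_cancel₀ _ (by positivity)]
      _ ≤ _ := by gcongr; exact le_max_right _ _

end TaylorRemainder

theorem DifferentiableOn.taylorRemainder_of_forall_mem_sphere {g : ℂ → ℂ → ℂ} {U : Set ℂ}
    (hU : IsOpen U) {ρ M : ℝ} (hρ : 0 < ρ) (m : ℕ) {u : ℂ}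
    (hg : ∀ x ∈ U, DifferentiableOn ℂ (g x) (closedBall 0 ρ))
    (hg_param : ∀ ζ ∈ insert u (sphere (0 : ℂ) ρ), DifferentiableOn ℂ (g · ζ) U)
    (hM : ∀ x ∈ U, ∀ ζ ∈ sphere (0 : ℂ) ρ, ‖g x ζ‖ ≤ M) :
    DifferentiableOn ℂ (fun x => taylorRemainder m (g x) u) U :=
  (hg_param u (Set.mem_insert _ _)).sub <| DifferentiableOn.fun_sum fun r _ =>
    ((differentiableOn_iteratedDeriv_of_forall_mem_sphere hU hρ r hg
      (fun ζ hζ => hg_param ζ (Set.mem_insert_of_mem _ hζ)) hM).mul_const _).div_const _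

theorem Real.rpow_le_rpow_sub_add_rpow_add {t x y ε : ℝ} (ht : 0 < t) (hxy : |x - y| ≤ ε) :
    t ^ x ≤ t ^ (y - ε) + t ^ (y + ε) := by
  obtain ⟨h₁, h₂⟩ := abs_sub_le_iff.1 hxy
  rcases le_total t 1 with ht1 | ht1
  · exact (Real.rpow_le_rpow_of_exponent_ge ht ht1 (by linarith)).trans
      (le_add_of_nonneg_right (by positivity))
  · exact (Real.rpow_le_rpow_of_exponent_le ht1 (by linarith)).trans
      (le_add_of_nonneg_left (by positivity))

theorem norm_exp_mul_ofReal_log {t : ℝ} (ht : 0 < t) (s : ℂ) :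
    ‖exp (s * Real.log t)‖ = t ^ s.re := by
  rw [norm_exp, re_mul_ofReal, Real.rpow_def_of_pos ht, mul_comm]

noncomputable def apostolGen (z w t : ℂ) : ℂ := t * exp (t * w) / (z * exp t - 1)

noncomputable def apostolIntegrand (m : ℕ) (z w s : ℂ) (t : ℝ) : ℂ :=
  taylorRemainder m (apostolGen z w) (-t) * exp ((s - 2) * Real.log t)

theorem integrand_eq_apostolIntegrand (m : ℕ) (z w s : ℂ) (t : ℝ) :
    ((t : ℂ) * exp (-(t : ℂ) * w) / (1 - z * exp (-(t : ℂ))) -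
      ∑ r ∈ Finset.range (m + 1),
        apostolB r z w * (-1 : ℂ) ^ r * (t : ℂ) ^ r / (r.factorial : ℂ)) *
      exp ((s - 2) * (Real.log t : ℂ)) = apostolIntegrand m z w s t := by
  have hgen :
      (t : ℂ) * exp (-(t : ℂ) * w) / (1 - z * exp (-(t : ℂ))) = apostolGen z w (-t) := by
    rw [apostolGen, ← neg_div_neg_eq, neg_sub]
    ring
  simp only [apostolIntegrand, taylorRemainder, hgen, apostolB, neg_pow (t : ℂ)]
  congr 2
  exact Finset.sum_congr rfl fun r _ => by unfold apostolGen; ring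

theorem measurable_apostolIntegrand (m : ℕ) (z w s : ℂ) :
    Measurable (apostolIntegrand m z w s) := by
  unfold apostolIntegrand taylorRemainder apostolGen
  fun_prop

theorem exists_mul_exp_sub_one_ne_zero {α : ℝ} {z : ℂ}
    (hz : z ∉ segOneExp α) : ∃ δ > 0, ∀ z' ∈ closedBall z δ,
      ∀ u ∈ cthickening δ (ofReal '' Set.Icc (-α) 0), z' * exp u - 1 ≠ 0 := by
  have hJ : IsCompact (ofReal '' Set.Icc (-α) 0) := isCompact_Icc.image continuous_ofReal
  -- A uniform thickening of the compact set `{z} × [-α, 0]` stays in the open set where the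
  -- denominator does not vanish.
  have hKV : {z} ×ˢ (ofReal '' Set.Icc (-α) 0) ⊆ {p : ℂ × ℂ | p.1 * exp p.2 - 1 ≠ 0} := by
    rintro ⟨_, _⟩ ⟨rfl, x, hx, rfl⟩ h
    refine hz ⟨Real.exp (-x), Real.one_le_exp (by linarith [hx.2]),
      Real.exp_le_exp.2 (by linarith [hx.1]), ?_⟩
    rw [ofReal_exp, ofReal_neg, exp_neg]
    exact (eq_inv_of_mul_eq_one_left (sub_eq_zero.1 h)).symm
  have hV : IsOpen {p : ℂ × ℂ | p.1 * exp p.2 - 1 ≠ 0} :=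
    isOpen_ne_fun (by fun_prop) continuous_const
  obtain ⟨δ, hδ, hsub⟩ := (isCompact_singleton.prod hJ).exists_cthickening_subset_open hV hKV
  refine ⟨δ, hδ, fun z' hz' u hu => ?_⟩
  rw [hJ.cthickening_eq_biUnion_closedBall hδ.le] at hu
  obtain ⟨v, hv, huv⟩ := Set.mem_iUnion₂.1 hu
  have hmem : (z', u) ∈ closedBall (z, v) δ := by
    rw [mem_closedBall, Prod.dist_eq]
    exact max_le hz' huv
  exact hsub (closedBall_subset_cthickening (Set.mk_mem_prod (Set.mem_singleton z) hv) δ hmem)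

theorem exists_norm_apostolGen_le {S : Set ℂ} (hS : IsCompact S) {z : ℂ} {δ : ℝ}
    (hden : ∀ z' ∈ closedBall z δ, ∀ u ∈ S, z' * exp u - 1 ≠ 0) (w : ℂ) :
    ∃ M, ∀ z' ∈ closedBall z δ, ∀ w' ∈ closedBall w 1, ∀ u ∈ S, ‖apostolGen z' w' u‖ ≤ M := by
  have hK := (isCompact_closedBall z δ).prod ((isCompact_closedBall w 1).prod hS)
  have hcont : ContinuousOn (fun p : ℂ × ℂ × ℂ => apostolGen p.1 p.2.1 p.2.2)
      (closedBall z δ ×ˢ closedBall w 1 ×ˢ S) := by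
    have : ∀ p ∈ closedBall z δ ×ˢ closedBall w 1 ×ˢ S, p.1 * exp p.2.2 - 1 ≠ 0 :=
      fun p hp => hden _ hp.1 _ hp.2.2
    unfold apostolGen
    fun_prop (disch := assumption)
  obtain ⟨M, hM⟩ := hK.exists_bound_of_continuousOn hcont
  exact ⟨M, fun z' hz' w' hw' u hu => hM (z', w', u) ⟨hz', hw', hu⟩⟩

theorem differentiableOn_apostolGen {z w : ℂ} {S : Set ℂ} (hden : ∀ u ∈ S, z * exp u - 1 ≠ 0) :
    DifferentiableOn ℂ (apostolGen z w) S := fun u hu => by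
  have := hden u hu
  unfold apostolGen
  exact DifferentiableAt.differentiableWithinAt (by fun_prop (disch := assumption))

theorem closedBall_zero_subset_cthickening {α : ℝ} (hα : 0 ≤ α) (δ : ℝ) :
    closedBall (0 : ℂ) δ ⊆ cthickening δ (ofReal '' Set.Icc (-α) 0) :=
  closedBall_subset_cthickening (E := ofReal '' Set.Icc (-α) 0)
    ⟨0, ⟨by linarith, le_rfl⟩, ofReal_zero⟩ δ

theorem neg_ofReal_mem_cthickening {α t : ℝ} (ht : t ∈ Set.Icc 0 α) (δ : ℝ) :
    -(t : ℂ) ∈ cthickening δ (ofReal '' Set.Icc (-α) 0) :=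
  self_subset_cthickening _ ⟨-t, ⟨by linarith [ht.2], by linarith [ht.1]⟩, ofReal_neg t⟩

section ApostolIntegrand

variable {α δ : ℝ} {z : ℂ}

theorem exists_norm_taylorRemainder_apostolGen_le (hα : 0 ≤ α) (hδ : 0 < δ)
    (hden : ∀ z' ∈ closedBall z δ, ∀ u ∈ cthickening δ (ofReal '' Set.Icc (-α) 0),
      z' * exp u - 1 ≠ 0) (m : ℕ) (w : ℂ) :
    ∃ C, ∀ z' ∈ closedBall z δ, ∀ w' ∈ closedBall w 1, ∀ t ∈ Set.Icc 0 α,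
      ‖taylorRemainder m (apostolGen z' w') (-t)‖ ≤ C * t ^ (m + 1) := by
  obtain ⟨M, hM⟩ := exists_norm_apostolGen_le
    ((isCompact_Icc.image continuous_ofReal).cthickening) hden w
  obtain ⟨C, hC⟩ := exists_norm_taylorRemainder_le m hδ M α
  refine ⟨C, fun z' hz' w' hw' t ht => ?_⟩
  have hball := closedBall_zero_subset_cthickening hα δ
  have hnorm : ‖-(t : ℂ)‖ = t := by rw [norm_neg, norm_real, Real.norm_of_nonneg ht.1]
  simpa only [hnorm] using hC _
    (differentiableOn_apostolGen fun u hu => hden z' hz' u (hball hu))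
    (fun ζ hζ => hM z' hz' w' hw' ζ (hball (sphere_subset_closedBall hζ))) (-t)
    (hnorm.trans_le ht.2) (hM z' hz' w' hw' _ (neg_ofReal_mem_cthickening ht δ))

theorem exists_integrableOn_bound_apostolIntegrand (hα : 0 ≤ α) (hδ : 0 < δ)
    (hden : ∀ z' ∈ closedBall z δ, ∀ u ∈ cthickening δ (ofReal '' Set.Icc (-α) 0),
      z' * exp u - 1 ≠ 0) (m : ℕ) (w : ℂ) {s : ℂ} (hs : -(m : ℝ) < s.re) :
    ∃ ε > 0, ∃ bound : ℝ → ℝ, IntegrableOn bound (Set.Ioc 0 α) ∧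
      ∀ z' ∈ closedBall z δ, ∀ w' ∈ closedBall w 1, ∀ σ ∈ ball s ε, ∀ t ∈ Set.Ioc 0 α,
        ‖apostolIntegrand m z' w' σ t‖ ≤ bound t := by
  obtain ⟨C, hC⟩ := exists_norm_taylorRemainder_apostolGen_le hα hδ hden m w
  -- `ε = (m + Re s) / 2` keeps both exponents of the bound above `-1`.
  set ε := (m + s.re) / 2 with hε
  refine ⟨ε, by linarith, fun t => C * (t ^ (m - 1 + s.re - ε) + t ^ (m - 1 + s.re + ε)),
    ?_, fun z' hz' w' hw' σ hσ t ht => ?_⟩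
  · exact ((intervalIntegral.intervalIntegrable_rpow' (by linarith)).1.add
      (intervalIntegral.intervalIntegrable_rpow' (by linarith)).1).const_mul C
  have hσ' : |(σ - 2).re - (s.re - 2)| ≤ ε := by
    simpa using (abs_re_le_norm (σ - s)).trans (mem_ball_iff_norm.1 hσ).le
  calc ‖apostolIntegrand m z' w' σ t‖
      ≤ C * t ^ (m + 1) * (t ^ (s.re - 2 - ε) + t ^ (s.re - 2 + ε)) := by
        rw [apostolIntegrand, norm_mul, norm_exp_mul_ofReal_log ht.1]
        have hR := hC z' hz' w' hw' t (Set.Ioc_subset_Icc_self ht)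
        exact mul_le_mul hR (Real.rpow_le_rpow_sub_add_rpow_add ht.1 hσ')
          (Real.rpow_nonneg ht.1.le _) ((norm_nonneg _).trans hR)
    _ = C * (t ^ (m - 1 + s.re - ε) + t ^ (m - 1 + s.re + ε)) := by
        rw [← Real.rpow_natCast, mul_assoc, mul_add, ← Real.rpow_add ht.1,
          ← Real.rpow_add ht.1]
        push_cast
        ring_nf

theorem differentiableOn_apostolIntegrand_z (hα : 0 ≤ α) (hδ : 0 < δ)
    (hden : ∀ z' ∈ closedBall z δ, ∀ u ∈ cthickening δ (ofReal '' Set.Icc (-α) 0),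
      z' * exp u - 1 ≠ 0) (m : ℕ) (w s : ℂ) {t : ℝ} (ht : t ∈ Set.Icc 0 α) :
    DifferentiableOn ℂ (fun z' => apostolIntegrand m z' w s t) (ball z δ) := by
  obtain ⟨M, hM⟩ := exists_norm_apostolGen_le
    ((isCompact_Icc.image continuous_ofReal).cthickening) hden w
  have hball := closedBall_zero_subset_cthickening hα δ
  refine (DifferentiableOn.taylorRemainder_of_forall_mem_sphere isOpen_ball hδ m
    (g := fun z' => apostolGen z' w) (fun z' hz' => differentiableOn_apostolGen fun u hu =>
      hden z' (ball_subset_closedBall hz') u (hball hu)) (fun ζ hζ z' hz' => ?_)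
    (fun z' hz' ζ hζ => hM z' (ball_subset_closedBall hz') w (mem_closedBall_self zero_le_one)
      ζ (hball (sphere_subset_closedBall hζ)))).mul_const _
  have : z' * exp ζ - 1 ≠ 0 := hden z' (ball_subset_closedBall hz') ζ <| by
    rcases hζ with rfl | hζ
    exacts [neg_ofReal_mem_cthickening ht δ, hball (sphere_subset_closedBall hζ)]
  unfold apostolGen
  exact DifferentiableAt.differentiableWithinAt (by fun_prop (disch := assumption))

theorem differentiableOn_apostolIntegrand_w (hα : 0 ≤ α) (hδ : 0 < δ)
    (hden : ∀ z' ∈ closedBall z δ, ∀ u ∈ cthickening δ (ofReal '' Set.Icc (-α) 0),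
      z' * exp u - 1 ≠ 0) (m : ℕ) (w s : ℂ) (t : ℝ) :
    DifferentiableOn ℂ (fun w' => apostolIntegrand m z w' s t) (ball w 1) := by
  obtain ⟨M, hM⟩ := exists_norm_apostolGen_le
    ((isCompact_Icc.image continuous_ofReal).cthickening) hden w
  have hball := closedBall_zero_subset_cthickening hα δ
  have hz := mem_closedBall_self (x := z) hδ.le
  refine (DifferentiableOn.taylorRemainder_of_forall_mem_sphere isOpen_ball hδ m
    (g := fun w' => apostolGen z w') (fun _ _ => differentiableOn_apostolGen fun u hu =>
      hden z hz u (hball hu)) (fun ζ _ => ?_)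
    (fun w' hw' ζ hζ => hM z hz w' (ball_subset_closedBall hw') ζ
      (hball (sphere_subset_closedBall hζ)))).mul_const _
  unfold apostolGen
  exact Differentiable.differentiableOn (by fun_prop)

theorem differentiable_apostolIntegrand_s (m : ℕ) (z w : ℂ) (t : ℝ) :
    Differentiable ℂ (fun s => apostolIntegrand m z w s t) := by
  unfold apostolIntegrand
  fun_prop

end ApostolIntegrand

theorem I_integral_holomorphic (α : ℝ) (hα : 1 ≤ α) (m N : ℕ) :
    ∀ z s w : ℂ, z ∉ segOneExp α → -(m : ℝ) < s.re → -(N : ℝ) < w.re →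
      IntegrableOn (fun t : ℝ =>
          ((t : ℂ) * Complex.exp (-(t : ℂ) * ((N : ℂ) + w)) /
              (1 - z * Complex.exp (-(t : ℂ))) -
            ∑ r ∈ Finset.range (m + 1),
              apostolB r z ((N : ℂ) + w) * (-1 : ℂ) ^ r * (t : ℂ) ^ r / (r.factorial : ℂ)) *
          Complex.exp ((s - 2) * (Real.log t : ℂ))) (Set.Ioc 0 α) ∧
      DifferentiableAt ℂ (fun z' => ∫ t in Set.Ioc (0 : ℝ) α,
          ((t : ℂ) * Complex.exp (-(t : ℂ) * ((N : ℂ) + w)) /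
              (1 - z' * Complex.exp (-(t : ℂ))) -
            ∑ r ∈ Finset.range (m + 1),
              apostolB r z' ((N : ℂ) + w) * (-1 : ℂ) ^ r * (t : ℂ) ^ r / (r.factorial : ℂ)) *
          Complex.exp ((s - 2) * (Real.log t : ℂ))) z ∧
      DifferentiableAt ℂ (fun s' => ∫ t in Set.Ioc (0 : ℝ) α,
          ((t : ℂ) * Complex.exp (-(t : ℂ) * ((N : ℂ) + w)) /
              (1 - z * Complex.exp (-(t : ℂ))) -
            ∑ r ∈ Finset.range (m + 1),
              apostolB r z ((N : ℂ) + w) * (-1 : ℂ) ^ r * (t : ℂ) ^ r / (r.factorial : ℂ)) *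
          Complex.exp ((s' - 2) * (Real.log t : ℂ))) s ∧
      DifferentiableAt ℂ (fun w' => ∫ t in Set.Ioc (0 : ℝ) α,
          ((t : ℂ) * Complex.exp (-(t : ℂ) * ((N : ℂ) + w')) /
              (1 - z * Complex.exp (-(t : ℂ))) -
            ∑ r ∈ Finset.range (m + 1),
              apostolB r z ((N : ℂ) + w') * (-1 : ℂ) ^ r * (t : ℂ) ^ r / (r.factorial : ℂ)) *
          Complex.exp ((s - 2) * (Real.log t : ℂ))) w := by
  intro z s w hz hs _
  simp only [integrand_eq_apostolIntegrand]
  have hα₀ : 0 ≤ α := by linarith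
  obtain ⟨δ, hδ, hden⟩ := exists_mul_exp_sub_one_ne_zero hz
  obtain ⟨ε, hε, bound, hbound_int, hbound⟩ :=
    exists_integrableOn_bound_apostolIntegrand hα₀ hδ hden m (N + w) hs
  have hz₀ := mem_closedBall_self (x := z) hδ.le
  have hw₀ := mem_closedBall_self (x := (N : ℂ) + w) zero_le_one
  have hs₀ := mem_ball_self (x := s) hε
  have hmeas (z' w' σ : ℂ) : AEStronglyMeasurable (apostolIntegrand m z' w' σ)
      (volume.restrict (Set.Ioc 0 α)) :=
    (measurable_apostolIntegrand m z' w' σ).aestronglyMeasurable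
  refine ⟨hbound_int.mono' (hmeas _ _ _) ((ae_restrict_iff' measurableSet_Ioc).2
    (.of_forall fun t ht => hbound z hz₀ _ hw₀ s hs₀ t ht)), ?_, ?_, ?_⟩
  · exact (differentiableOn_setIntegral_of_forall_mem measurableSet_Ioc isOpen_ball
      (fun _ _ => hmeas _ _ _)
      (fun t ht => differentiableOn_apostolIntegrand_z hα₀ hδ hden m _ s
        (Set.Ioc_subset_Icc_self ht))
      (fun t ht z' hz' => hbound z' (ball_subset_closedBall hz') _ hw₀ s hs₀ t ht)
      hbound_int).differentiableAt (ball_mem_nhds z hδ)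
  · exact (differentiableOn_setIntegral_of_forall_mem measurableSet_Ioc isOpen_ball
      (fun _ _ => hmeas _ _ _)
      (fun t _ => (differentiable_apostolIntegrand_s m z _ t).differentiableOn)
      (fun t ht σ hσ => hbound z hz₀ _ hw₀ σ hσ t ht)
      hbound_int).differentiableAt (ball_mem_nhds s hε)
  · have hw : DifferentiableAt ℂ (fun w' => ∫ t in Set.Ioc 0 α, apostolIntegrand m z w' s t)
        (N + w) :=
      (differentiableOn_setIntegral_of_forall_mem measurableSet_Ioc isOpen_ball
        (fun _ _ => hmeas _ _ _)
        (fun t _ => differentiableOn_apostolIntegrand_w hα₀ hδ hden m _ s t)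
        (fun t ht w' hw' => hbound z hz₀ w' (ball_subset_closedBall hw') s hs₀ t ht)
        hbound_int).differentiableAt (ball_mem_nhds _ zero_lt_one)
    exact hw.comp w (differentiableAt_id.const_add _)
end
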